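/- arXiv:2209.11663 — 5 statements merged into one kernel-verified Lean document; each statement's English description precedes it below -/
import Mathlib

section
/- For β > 0 and H Hermitian on a finite-dimensional complex Hilbert space, the Helmholtz functional Ω(ρ) = Tr(ρH) + β⁻¹Tr(ρ log ρ) attains its minimum over the set of density matrices, and the unique minimizer is the Gibbs state ρ = e^{-βH}/Tr(e^{-βH}). -/
open Matrix BigOperators
open scoped ComplexOrder

/-- Von Neumann entropy `S(ρ) = -Tr(ρ log ρ)`, defined spectrally with `0 log 0 = 0`. -/
noncomputable def vnEntropy {n : Type*} [Fintype n] [DecidableEq n]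
    (ρ : Matrix n n ℂ) : ℝ :=
  if h : ρ.IsHermitian then -∑ i, h.eigenvalues i * Real.log (h.eigenvalues i) else 0

/-- A density matrix: Hermitian positive semidefinite with unit trace. -/
def IsDensityMatrix {n : Type*} [Fintype n] [DecidableEq n] (ρ : Matrix n n ℂ) : Prop :=
  ρ.PosSemidef ∧ ρ.trace = 1

/-- The Helmholtz functional `Ω(ρ) = Tr(ρH) + β⁻¹ Tr(ρ log ρ) = Tr(ρH) - β⁻¹ S(ρ)`. -/
noncomputable def helmholtz {n : Type*} [Fintype n] [DecidableEq n]
    (H : Matrix n n ℂ) (β : ℝ) (ρ : Matrix n n ℂ) : ℝ :=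
  ((ρ * H).trace).re - β⁻¹ * vnEntropy ρ

/-- The Gibbs state `e^{-βH} / Tr(e^{-βH})`. -/
noncomputable def gibbs {n : Type*} [Fintype n] [DecidableEq n]
    (β : ℝ) (H : Matrix n n ℂ) : Matrix n n ℂ :=
  ((NormedSpace.exp ((-β : ℂ) • H)).trace)⁻¹ • NormedSpace.exp ((-β : ℂ) • H)

/-!
Diagonalize `H = U diag(ε) U*` and `ρ = V diag(p) V*`. The Gibbs state is `U diag(q) U*` with
`q j = e^{-β ε j} / Z`, and with the overlaps `c i j = |(V* U) i j|²`, a doubly stochastic matrix,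
`β Ω(ρ) + log Z = ∑ i j, c i j (p i log p i - p i log q j)`: the relative entropy of `ρ` with
respect to the Gibbs state. Double stochasticity rewrites this as
`∑ i j, c i j q j klFun (p i / q j) ≥ 0` (Klein's inequality), and it vanishes only if
`p i = q j` whenever `c i j ≠ 0`, i.e. `diag(p) V* U = V* U diag(q)`, which says `ρ = U diag(q) U*`.
-/

open Real InformationTheory

lemma Real.mul_log_sub_mul_log_sub_add_eq_mul_klFun {x y : ℝ} (hy : 0 < y) :
    x * log x - x * log y - x + y = y * klFun (x / y) := by
  rcases eq_or_ne x 0 with rfl | hx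
  · simp [klFun]
  · rw [klFun, log_div hx hy.ne']
    field_simp
    ring

variable {ι : Type*} [Fintype ι]

section OverlapRelEntropy

/-- The relative entropy `Tr ρ (log ρ - log σ)` of `ρ = V diag(p) V*` and `σ = U diag(q) U*`,
written through the overlap matrix `c i j = |(V* U) i j|²`. -/
noncomputable def overlapRelEntropy (c : Matrix ι ι ℝ) (p q : ι → ℝ) : ℝ :=
  ∑ i, ∑ j, c i j * (p i * log (p i) - p i * log (q j))

variable [DecidableEq ι] {c : Matrix ι ι ℝ} {p q : ι → ℝ}

lemma overlapRelEntropy_eq_sum_klFun (hc : c ∈ doublyStochastic ℝ ι) (hq : ∀ j, 0 < q j)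
    (hpq : ∑ i, p i = ∑ j, q j) :
    overlapRelEntropy c p q = ∑ i, ∑ j, c i j * (q j * klFun (p i / q j)) := by
  rw [mem_doublyStochastic_iff_sum] at hc
  obtain ⟨-, hrow, hcol⟩ := hc
  have hbalance : ∑ i, ∑ j, c i j * (p i - q j) = 0 := by
    have hp : ∑ i, ∑ j, c i j * p i = ∑ i, p i := by simp [← Finset.sum_mul, hrow]
    have hq : ∑ i, ∑ j, c i j * q j = ∑ j, q j := by
      rw [Finset.sum_comm]
      simp [← Finset.sum_mul, hcol]
    simp only [mul_sub, Finset.sum_sub_distrib, hp, hq, hpq, sub_self]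
  rw [overlapRelEntropy, ← sub_zero (∑ i, ∑ j, _), ← hbalance, ← Finset.sum_sub_distrib]
  refine Finset.sum_congr rfl fun i _ => ?_
  rw [← Finset.sum_sub_distrib]
  refine Finset.sum_congr rfl fun j _ => ?_
  rw [← Real.mul_log_sub_mul_log_sub_add_eq_mul_klFun (hq j)]
  ring

lemma overlapRelEntropy_nonneg (hc : c ∈ doublyStochastic ℝ ι) (hp : ∀ i, 0 ≤ p i)
    (hq : ∀ j, 0 < q j) (hpq : ∑ i, p i = ∑ j, q j) : 0 ≤ overlapRelEntropy c p q := by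
  rw [overlapRelEntropy_eq_sum_klFun hc hq hpq]
  exact Finset.sum_nonneg fun i _ => Finset.sum_nonneg fun j _ =>
    mul_nonneg (nonneg_of_mem_doublyStochastic hc)
      (mul_nonneg (hq j).le (klFun_nonneg (div_nonneg (hp i) (hq j).le)))

lemma eq_zero_or_eq_of_overlapRelEntropy_eq_zero (hc : c ∈ doublyStochastic ℝ ι)
    (hp : ∀ i, 0 ≤ p i) (hq : ∀ j, 0 < q j) (hpq : ∑ i, p i = ∑ j, q j)
    (h : overlapRelEntropy c p q = 0) (i j : ι) : c i j = 0 ∨ p i = q j := by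
  have hterm : ∀ i j, 0 ≤ c i j * (q j * klFun (p i / q j)) := fun i j =>
    mul_nonneg (nonneg_of_mem_doublyStochastic hc)
      (mul_nonneg (hq j).le (klFun_nonneg (div_nonneg (hp i) (hq j).le)))
  rw [overlapRelEntropy_eq_sum_klFun hc hq hpq,
    Finset.sum_eq_zero_iff_of_nonneg fun i _ => Finset.sum_nonneg fun j _ => hterm i j] at h
  have hij := (Finset.sum_eq_zero_iff_of_nonneg fun j _ => hterm i j).1
    (h i (Finset.mem_univ i)) j (Finset.mem_univ j)
  rcases mul_eq_zero.1 hij with hc0 | hkl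
  · exact .inl hc0
  · rw [mul_eq_zero, klFun_eq_zero_iff (div_nonneg (hp i) (hq j).le),
      div_eq_one_iff_eq (hq j).ne'] at hkl
    exact .inr (hkl.resolve_left (hq j).ne')

lemma overlapRelEntropy_one_self (p : ι → ℝ) : overlapRelEntropy 1 p p = 0 := by
  simp [overlapRelEntropy, one_apply]

end OverlapRelEntropy

section Boltzmann

noncomputable def partitionFunction (β : ℝ) (ε : ι → ℝ) : ℝ := ∑ j, exp (-(β * ε j))

noncomputable def boltzmannWeights (β : ℝ) (ε : ι → ℝ) (i : ι) : ℝ :=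
  exp (-(β * ε i)) / partitionFunction β ε

variable [Nonempty ι] (β : ℝ) (ε : ι → ℝ)

lemma partitionFunction_pos : 0 < partitionFunction β ε :=
  Finset.sum_pos (fun _ _ => exp_pos _) Finset.univ_nonempty

lemma boltzmannWeights_pos (i : ι) : 0 < boltzmannWeights β ε i :=
  div_pos (exp_pos _) (partitionFunction_pos β ε)

lemma sum_boltzmannWeights : ∑ i, boltzmannWeights β ε i = 1 := by
  simp_rw [boltzmannWeights, ← Finset.sum_div]
  rw [← partitionFunction, div_self (partitionFunction_pos β ε).ne']

lemma log_boltzmannWeights (i : ι) :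
    log (boltzmannWeights β ε i) = -(β * ε i) - log (partitionFunction β ε) := by
  rw [boltzmannWeights, log_div (exp_pos _).ne' (partitionFunction_pos β ε).ne', log_exp]

lemma overlapRelEntropy_boltzmannWeights {c : Matrix ι ι ℝ}
    (hc : ∀ i, ∑ j, c i j = 1) {p : ι → ℝ} (hp : ∑ i, p i = 1) :
    overlapRelEntropy c p (boltzmannWeights β ε) =
      ∑ i, p i * log (p i) + β * ∑ i, ∑ j, c i j * (p i * ε j) +
        log (partitionFunction β ε) := by
  have hterm : ∀ i j, c i j * (p i * log (p i) - p i * (-(β * ε j) - log (partitionFunction β ε)))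
      = c i j * (p i * log (p i)) + β * (c i j * (p i * ε j)) +
        log (partitionFunction β ε) * (c i j * p i) := fun i j => by ring
  simp only [overlapRelEntropy, log_boltzmannWeights, hterm, Finset.sum_add_distrib,
    ← Finset.mul_sum, ← Finset.sum_mul, hc, one_mul, hp, mul_one]

end Boltzmann

section Spectral

variable [DecidableEq ι] {U V : Matrix ι ι ℂ}

lemma map_normSq_mem_doublyStochastic (hU : U ∈ unitaryGroup ι ℂ) :
    U.map Complex.normSq ∈ doublyStochastic ℝ ι := by
  have hdiag : ∀ {A B : Matrix ι ι ℂ}, A * B = 1 → ∀ i, ∑ j, A i j * B j i = 1 := fun h i => by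
    simpa [mul_apply] using congrFun (congrFun h i) i
  rw [mem_doublyStochastic_iff_sum]
  refine ⟨fun i j => Complex.normSq_nonneg _, fun i => ?_, fun j => ?_⟩
  · have h := hdiag (Unitary.mul_star_self_of_mem hU) i
    simp only [star_apply, RCLike.star_def, Complex.mul_conj] at h
    exact_mod_cast h
  · have h := hdiag (Unitary.star_mul_self_of_mem hU) j
    simp only [star_apply, RCLike.star_def, mul_comm _ (U _ j), Complex.mul_conj] at h
    exact_mod_cast h

lemma trace_diagonal_mul_mul_diagonal_mul_star (W : Matrix ι ι ℂ) (p ε : ι → ℝ) :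
    (diagonal (fun i => (p i : ℂ)) * W * diagonal (fun j => (ε j : ℂ)) * star W).trace =
      ((∑ i, ∑ j, W.map Complex.normSq i j * (p i * ε j) : ℝ) : ℂ) := by
  simp only [trace, diag_apply, mul_apply, diagonal_apply, ite_mul, zero_mul, mul_ite, mul_zero,
    Finset.sum_ite_eq, Finset.sum_ite_eq', Finset.mem_univ, if_true, star_apply, RCLike.star_def,
    map_apply]
  push_cast
  refine Finset.sum_congr rfl fun i _ => Finset.sum_congr rfl fun j _ => ?_
  rw [← Complex.mul_conj]
  ring

open Polynomial in
lemma Matrix.IsHermitian.sum_comp_eigenvalues_eq {A : Matrix ι ι ℂ} (hA : A.IsHermitian)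
    (hU : U ∈ unitaryGroup ι ℂ) {d : ι → ℝ} (hAd : A = U * diagonal (fun i => (d i : ℂ)) * star U)
    (f : ℝ → ℝ) : ∑ i, f (hA.eigenvalues i) = ∑ i, f (d i) := by
  have hcharpoly : A.charpoly =
      (((Finset.univ.val.map d).map (RCLike.ofReal : ℝ → ℂ)).map (fun a => X - C a)).prod := by
    rw [hAd, charpoly_mul_comm, ← Matrix.mul_assoc, Unitary.star_mul_self_of_mem hU,
      Matrix.one_mul, charpoly_diagonal, Multiset.map_map, Multiset.map_map, Finset.prod_map_val]
    rfl
  have hroots := hA.roots_charpoly_eq_eigenvalues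
  rw [hcharpoly, roots_multiset_prod_X_sub_C, ← Multiset.map_map] at hroots
  have hmultiset := Multiset.map_injective (RCLike.ofReal_injective (K := ℂ)) hroots
  simp only [← Finset.sum_map_val, ← Function.comp_apply (f := f), ← Multiset.map_map, hmultiset]

lemma isHermitian_conj_diagonal (U : Matrix ι ι ℂ) (d : ι → ℝ) :
    (U * diagonal (fun i => (d i : ℂ)) * star U).IsHermitian :=
  isHermitian_mul_mul_conjTranspose U (isHermitian_diagonal_of_self_adjoint _ (by ext; simp))

lemma vnEntropy_conj_diagonal (hU : U ∈ unitaryGroup ι ℂ) (d : ι → ℝ) :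
    vnEntropy (U * diagonal (fun i => (d i : ℂ)) * star U) = -∑ i, d i * log (d i) := by
  rw [vnEntropy, dif_pos (isHermitian_conj_diagonal U d),
    (isHermitian_conj_diagonal U d).sum_comp_eigenvalues_eq hU rfl fun x => x * log x]

lemma trace_conj_of_mem_unitaryGroup (hU : U ∈ unitaryGroup ι ℂ) (A : Matrix ι ι ℂ) :
    (U * A * star U).trace = A.trace := by
  rw [trace_mul_cycle, Unitary.star_mul_self_of_mem hU, Matrix.one_mul]

lemma exp_conj_diagonal (hU : U ∈ unitaryGroup ι ℂ) (d : ι → ℝ) :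
    NormedSpace.exp (U * diagonal (fun i => (d i : ℂ)) * star U) =
      U * diagonal (fun i => (exp (d i) : ℂ)) * star U := by
  have hunit : IsUnit U :=
    ⟨⟨U, star U, Unitary.mul_star_self_of_mem hU, Unitary.star_mul_self_of_mem hU⟩, rfl⟩
  rw [← inv_eq_left_inv (Unitary.star_mul_self_of_mem hU), exp_conj _ _ hunit, exp_diagonal]
  congr
  ext i
  simp [Complex.ofReal_exp, ← Complex.exp_eq_exp_ℂ]

lemma gibbs_conj_diagonal (hU : U ∈ unitaryGroup ι ℂ) (β : ℝ) (ε : ι → ℝ) :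
    gibbs β (U * diagonal (fun i => (ε i : ℂ)) * star U) =
      U * diagonal (fun i => (boltzmannWeights β ε i : ℂ)) * star U := by
  have hsmul : ∀ (z : ℂ) (d : ι → ℂ),
      z • (U * diagonal d * star U) = U * diagonal (z • d) * star U := fun z d => by
    rw [diagonal_smul, Matrix.mul_smul, Matrix.smul_mul]
  have hexp : NormedSpace.exp ((-β : ℂ) • (U * diagonal (fun i => (ε i : ℂ)) * star U)) =
      U * diagonal (fun i => (exp (-(β * ε i)) : ℂ)) * star U := by
    rw [hsmul, ← exp_conj_diagonal hU]
    congr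
    ext i
    simp
  have htrace : (U * diagonal (fun i => (exp (-(β * ε i)) : ℂ)) * star U).trace =
      (partitionFunction β ε : ℂ) := by
    rw [trace_conj_of_mem_unitaryGroup hU, trace_diagonal, partitionFunction]
    push_cast
    rfl
  rw [gibbs, hexp, htrace, hsmul]
  congr
  ext i
  simp [boltzmannWeights, div_eq_inv_mul]

lemma isDensityMatrix_conj_diagonal (hU : U ∈ unitaryGroup ι ℂ) {q : ι → ℝ}
    (hq : ∀ i, 0 ≤ q i) (hsum : ∑ i, q i = 1) :
    IsDensityMatrix (U * diagonal (fun i => (q i : ℂ)) * star U) := by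
  refine ⟨(PosSemidef.diagonal fun i => ?_).mul_mul_conjTranspose_same U, ?_⟩
  · exact Complex.zero_le_real.2 (hq i)
  · rw [trace_conj_of_mem_unitaryGroup hU, trace_diagonal]
    exact_mod_cast hsum

lemma IsDensityMatrix.exists_eq_conj_diagonal {ρ : Matrix ι ι ℂ} (hρ : IsDensityMatrix ρ) :
    ∃ V ∈ unitaryGroup ι ℂ, ∃ p : ι → ℝ, (∀ i, 0 ≤ p i) ∧ ∑ i, p i = 1 ∧
      ρ = V * diagonal (fun i => (p i : ℂ)) * star V := by
  have hρH := hρ.1.isHermitian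
  refine ⟨_, hρH.eigenvectorUnitary.2, _, hρ.1.eigenvalues_nonneg, ?_, hρH.spectral_theorem⟩
  have htrace : ((∑ i, hρH.eigenvalues i : ℝ) : ℂ) = 1 := by
    push_cast
    exact hρH.trace_eq_sum_eigenvalues.symm.trans hρ.2
  exact_mod_cast htrace

lemma helmholtz_conj_diagonal [Nonempty ι] (hU : U ∈ unitaryGroup ι ℂ)
    (hV : V ∈ unitaryGroup ι ℂ) {H : Matrix ι ι ℂ} {ε : ι → ℝ}
    (hH : H = U * diagonal (fun i => (ε i : ℂ)) * star U) {β : ℝ} (hβ : β ≠ 0) {p : ι → ℝ}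
    (hp : ∑ i, p i = 1) :
    helmholtz H β (V * diagonal (fun i => (p i : ℂ)) * star V) =
      β⁻¹ * (overlapRelEntropy ((star V * U).map Complex.normSq) p (boltzmannWeights β ε) -
        log (partitionFunction β ε)) := by
  have htrace : (V * diagonal (fun i => (p i : ℂ)) * star V * H).trace =
      (diagonal (fun i => (p i : ℂ)) * (star V * U) * diagonal (fun j => (ε j : ℂ)) *
        star (star V * U)).trace := by
    rw [hH, star_mul, star_star]
    simp only [Matrix.mul_assoc]
    rw [trace_mul_comm V]
    simp only [Matrix.mul_assoc]
  have hrow := sum_row_of_mem_doublyStochastic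
    (map_normSq_mem_doublyStochastic (mul_mem (Unitary.star_mem hV) hU))
  rw [helmholtz, htrace, trace_diagonal_mul_mul_diagonal_mul_star, Complex.ofReal_re,
    vnEntropy_conj_diagonal hV, overlapRelEntropy_boltzmannWeights β ε hrow hp]
  field_simp
  ring

lemma conj_diagonal_eq_of_forall_eq_zero_or_eq (hU : U ∈ unitaryGroup ι ℂ)
    (hV : V ∈ unitaryGroup ι ℂ) {p q : ι → ℝ} (h : ∀ i j, (star V * U) i j = 0 ∨ p i = q j) :
    V * diagonal (fun i => (p i : ℂ)) * star V = U * diagonal (fun j => (q j : ℂ)) * star U := by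
  have hcomm : diagonal (fun i => (p i : ℂ)) * (star V * U) =
      (star V * U) * diagonal (fun j => (q j : ℂ)) := by
    ext i j
    rw [diagonal_mul, mul_diagonal]
    rcases h i j with h0 | hpq
    · rw [h0, mul_zero, zero_mul]
    · rw [hpq, mul_comm]
  calc V * diagonal (fun i => (p i : ℂ)) * star V
      = V * (diagonal (fun i => (p i : ℂ)) * (star V * U)) * star U := by
        simp only [Matrix.mul_assoc, Unitary.mul_star_self_of_mem hU, Matrix.mul_one]
    _ = U * diagonal (fun j => (q j : ℂ)) * star U := by
        rw [hcomm, ← Matrix.mul_assoc, ← Matrix.mul_assoc, Unitary.mul_star_self_of_mem hV,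
          Matrix.one_mul]

end Spectral

/-- For `β > 0` and Hermitian `H`, the Helmholtz functional attains its minimum over the set of
density matrices, and the unique minimizer is the Gibbs state `e^{-βH}/Tr(e^{-βH})`. -/
theorem gibbs_unique_minimizer {n : ℕ} (hn : 0 < n) (H : Matrix (Fin n) (Fin n) ℂ) (hH : H.IsHermitian)
    (β : ℝ) (hβ : 0 < β) :
    IsDensityMatrix (gibbs β H) ∧
      ∀ ρ : Matrix (Fin n) (Fin n) ℂ, IsDensityMatrix ρ →
        helmholtz H β (gibbs β H) ≤ helmholtz H β ρ ∧
          (helmholtz H β ρ = helmholtz H β (gibbs β H) → ρ = gibbs β H) := by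
  have : Nonempty (Fin n) := ⟨⟨0, hn⟩⟩
  set U : Matrix (Fin n) (Fin n) ℂ := ↑hH.eigenvectorUnitary
  have hU : U ∈ unitaryGroup (Fin n) ℂ := hH.eigenvectorUnitary.2
  have hHU : H = U * diagonal (fun i => (hH.eigenvalues i : ℂ)) * star U := hH.spectral_theorem
  set q := boltzmannWeights β hH.eigenvalues
  have hq := boltzmannWeights_pos β hH.eigenvalues
  have hq1 : ∑ j, q j = 1 := sum_boltzmannWeights β hH.eigenvalues
  have hgibbs : gibbs β H = U * diagonal (fun j => (q j : ℂ)) * star U := by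
    rw [hHU]
    exact gibbs_conj_diagonal hU β hH.eigenvalues
  have hΩgibbs : helmholtz H β (gibbs β H) =
      β⁻¹ * (0 - log (partitionFunction β hH.eigenvalues)) := by
    rw [hgibbs, helmholtz_conj_diagonal hU hU hHU hβ.ne' hq1, Unitary.star_mul_self_of_mem hU,
      Matrix.map_one _ (map_zero _) (map_one _), overlapRelEntropy_one_self]
  refine ⟨hgibbs ▸ isDensityMatrix_conj_diagonal hU (fun i => (hq i).le) hq1, fun ρ hρ => ?_⟩
  obtain ⟨V, hV, p, hp, hp1, rfl⟩ := hρ.exists_eq_conj_diagonal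
  have hc := map_normSq_mem_doublyStochastic (mul_mem (Unitary.star_mem hV) hU)
  have hpq : ∑ i, p i = ∑ j, q j := hp1.trans hq1.symm
  rw [hΩgibbs, helmholtz_conj_diagonal hU hV hHU hβ.ne' hp1]
  refine ⟨by gcongr; exact overlapRelEntropy_nonneg hc hp hq hpq, fun heq => ?_⟩
  rw [hgibbs]
  refine conj_diagonal_eq_of_forall_eq_zero_or_eq hU hV fun i j => ?_
  have hD : overlapRelEntropy ((star V * U).map Complex.normSq) p q = 0 := by
    linarith [mul_left_cancel₀ (inv_ne_zero hβ.ne') heq]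
  have hij := eq_zero_or_eq_of_overlapRelEntropy_eq_zero hc hp hq hpq hD i j
  rwa [map_apply, Complex.normSq_eq_zero] at hij
end

section
/- The function v ↦ -β⁻¹ log Tr(e^{-β(H₀ + V(v))}) is strictly concave on the space of traceless Hermitian matrices v, where V(v) is the linear map embedding a one-body potential v into the N-particle Hamiltonian (any injective-up-to-constants linear map from Hermitian matrices to Hermitian operators), assuming distinct traceless v₁ ≠ v₂ give Gibbs states that are distinct. -/
open Matrix BigOperators
open scoped ComplexOrder

/-- The free energy `-β⁻¹ log Tr(e^{-βH})`. -/
noncomputable def freeEnergy {n : Type*} [Fintype n] [DecidableEq n]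
    (β : ℝ) (H : Matrix n n ℂ) : ℝ :=
  -β⁻¹ * Real.log (((NormedSpace.exp ((-β : ℂ) • H)).trace).re)

/-!
The free energy is the minimum of the Helmholtz functional
`Ω_H(ρ) = Tr(ρH) - β⁻¹ S(ρ)` over density matrices, attained only at the Gibbs state of `H`
(Gibbs variational principle). Since `Ω_H(ρ)` is affine in `H`, evaluating at the Gibbs state `σ`
of `tH₁ + (1-t)H₂` gives `F(tH₁ + (1-t)H₂) = tΩ_{H₁}(σ) + (1-t)Ω_{H₂}(σ) ≥ tF(H₁) + (1-t)F(H₂)`,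
and the inequality is strict because `σ` cannot be the Gibbs state of both `H₁` and `H₂`.

For the variational principle, write `ρ = ∑ pᵢ |uᵢ⟩⟨uᵢ|` and `H = ∑ εⱼ |wⱼ⟩⟨wⱼ|`, and let `qⱼ` be
the Boltzmann weights of the `εⱼ`. Then `β(Ω_H(ρ) - F(H)) = ∑ᵢⱼ |⟨uᵢ, wⱼ⟩|² qⱼ klFun(pᵢ/qⱼ)`,
because the overlaps `|⟨uᵢ, wⱼ⟩|²` form a doubly stochastic matrix. Every term is nonnegative,
and all vanish only if `pᵢ = qⱼ` whenever `⟨uᵢ, wⱼ⟩ ≠ 0`, which says exactly that `ρ` is the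
Gibbs state.
-/

open InformationTheory
open scoped MatrixOrder

namespace Matrix

section RCLike

variable {𝕜 n : Type*} [RCLike 𝕜] [Fintype n] [DecidableEq n]

lemma sum_norm_sq_row_of_mem_unitaryGroup {U : Matrix n n 𝕜} (hU : U ∈ unitaryGroup n 𝕜)
    (i : n) : ∑ j, ‖U i j‖ ^ 2 = 1 := by
  have h := congr_fun₂ (mem_unitaryGroup_iff.mp hU) i i
  simp only [star_eq_conjTranspose, mul_apply, conjTranspose_apply, ← starRingEnd_apply,
    RCLike.mul_conj, one_apply_eq] at h
  exact_mod_cast h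

lemma sum_norm_sq_col_of_mem_unitaryGroup {U : Matrix n n 𝕜} (hU : U ∈ unitaryGroup n 𝕜)
    (j : n) : ∑ i, ‖U i j‖ ^ 2 = 1 := by
  have h := congr_fun₂ (mem_unitaryGroup_iff'.mp hU) j j
  simp only [star_eq_conjTranspose, mul_apply, conjTranspose_apply, ← starRingEnd_apply,
    RCLike.conj_mul, one_apply_eq] at h
  exact_mod_cast h

lemma norm_sq_mem_doublyStochastic {U : Matrix n n 𝕜} (hU : U ∈ unitaryGroup n 𝕜) :
    of (fun i j => ‖U i j‖ ^ 2) ∈ doublyStochastic ℝ n :=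
  mem_doublyStochastic_iff_sum.mpr ⟨fun _ _ => sq_nonneg _,
    sum_norm_sq_row_of_mem_unitaryGroup hU, sum_norm_sq_col_of_mem_unitaryGroup hU⟩

namespace IsHermitian

variable {A : Matrix n n 𝕜} (hA : A.IsHermitian)
include hA

lemma trace_cfc (f : ℝ → ℝ) : (cfc f A).trace = ∑ i, (f (hA.eigenvalues i) : 𝕜) := by
  rw [hA.cfc_eq, IsHermitian.cfc, Unitary.conjStarAlgAut_apply, trace_mul_cycle,
    Unitary.star_mul_self_of_mem hA.eigenvectorUnitary.2, one_mul, trace_diagonal]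
  rfl

lemma sum_comp_eigenvalues_cfc (f : ℝ → ℝ) (hf : (cfc f A).IsHermitian) (φ : ℝ → ℝ) :
    ∑ i, φ (hf.eigenvalues i) = ∑ i, φ (f (hA.eigenvalues i)) := by
  have hroots := hf.roots_charpoly_eq_eigenvalues
  rw [hA.charpoly_cfc_eq, Polynomial.roots_prod _ _
    (by simp [Finset.prod_ne_zero_iff, Polynomial.X_sub_C_ne_zero])] at hroots
  simp only [Polynomial.roots_X_sub_C, Multiset.bind_singleton] at hroots
  have heig : Finset.univ.val.map hf.eigenvalues = Finset.univ.val.map (f ∘ hA.eigenvalues) := by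
    apply Multiset.map_injective (RCLike.ofReal_injective (K := 𝕜))
    simp only [Multiset.map_map, ← hroots]
    rfl
  simpa [Multiset.map_map] using congrArg (fun s => (s.map φ).sum) heig

lemma trace_mul_eq_sum_norm_sq {B : Matrix n n 𝕜} (hB : B.IsHermitian) :
    (A * B).trace = ((∑ i, ∑ j, ‖(star (hA.eigenvectorUnitary : Matrix n n 𝕜) *
      hB.eigenvectorUnitary) i j‖ ^ 2 * (hA.eigenvalues i * hB.eigenvalues j) : ℝ) : 𝕜) := by
  set U : Matrix n n 𝕜 := (hA.eigenvectorUnitary : Matrix n n 𝕜)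
  set M : Matrix n n 𝕜 := star U * (hB.eigenvectorUnitary : Matrix n n 𝕜)
  have hAB : A * B = U * (diagonal (RCLike.ofReal ∘ hA.eigenvalues) * M *
      diagonal (RCLike.ofReal ∘ hB.eigenvalues) * star M) * star U := by
    conv_lhs => rw [hA.spectral_theorem, hB.spectral_theorem]
    simp only [Unitary.conjStarAlgAut_apply, M, star_mul, star_star, Matrix.mul_assoc]
    rw [Unitary.mul_star_self_of_mem hA.eigenvectorUnitary.2, Matrix.mul_one]
  rw [hAB, trace_mul_cycle, Unitary.star_mul_self_of_mem hA.eigenvectorUnitary.2, Matrix.one_mul]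
  push_cast
  refine Finset.sum_congr rfl fun i _ => ?_
  rw [diag_apply, mul_apply]
  refine Finset.sum_congr rfl fun j _ => ?_
  rw [mul_diagonal, diagonal_mul, star_eq_conjTranspose, conjTranspose_apply, ← RCLike.mul_conj]
  simp only [Function.comp_apply, RCLike.star_def]
  ring

end IsHermitian

end RCLike

variable {n : Type*} [Fintype n] [DecidableEq n]

lemma sum_sum_mul_add_of_mem_doublyStochastic {R : Type*} [CommRing R] [PartialOrder R]
    [IsOrderedRing R] {M : Matrix n n R} (hM : M ∈ doublyStochastic R n) (x y : n → R) :
    ∑ i, ∑ j, M i j * (x i + y j) = ∑ i, x i + ∑ j, y j := by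
  simp only [mul_add, Finset.sum_add_distrib]
  rw [Finset.sum_comm (f := fun i j => M i j * y j)]
  simp only [← Finset.sum_mul, sum_row_of_mem_doublyStochastic hM,
    sum_col_of_mem_doublyStochastic hM, one_mul]

lemma conj_diagonal_eq_conj_diagonal {R : Type*} [CommRing R] [StarRing R] {P W : Matrix n n R}
    (hP : P ∈ unitaryGroup n R) (hW : W ∈ unitaryGroup n R) {p q : n → R}
    (h : ∀ i j, (star P * W) i j = 0 ∨ p i = q j) :
    P * diagonal p * star P = W * diagonal q * star W := by
  set M := star P * W
  have hM : M * star M = 1 := by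
    simp only [M, star_mul, star_star, Matrix.mul_assoc]
    rw [← Matrix.mul_assoc W, Unitary.mul_star_self_of_mem hW, Matrix.one_mul,
      Unitary.star_mul_self_of_mem hP]
  have hPM : P * M = W := by
    rw [← Matrix.mul_assoc, Unitary.mul_star_self_of_mem hP, Matrix.one_mul]
  have hcomm : diagonal p * M = M * diagonal q := by
    ext i j
    rw [diagonal_mul, mul_diagonal]
    rcases h i j with h0 | hpq
    · simp [h0]
    · rw [hpq, mul_comm]
  calc P * diagonal p * star P = P * (diagonal p * M) * star M * star P := by
        rw [Matrix.mul_assoc P (diagonal p * M), Matrix.mul_assoc (diagonal p), hM,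
          Matrix.mul_one]
    _ = W * diagonal q * star W := by
        rw [hcomm, ← Matrix.mul_assoc, hPM, Matrix.mul_assoc, ← star_mul, hPM]

namespace IsHermitian

variable {A : Matrix n n ℂ} (hA : A.IsHermitian)
include hA

lemma exp_eq_cfc : NormedSpace.exp A = cfc Real.exp A := by
  rw [hA.cfc_eq, IsHermitian.cfc]
  conv_lhs => rw [hA.spectral_theorem]
  have hconj := exp_units_conj (Unitary.toUnits hA.eigenvectorUnitary)
    (diagonal (RCLike.ofReal ∘ hA.eigenvalues))
  simp only [Unitary.val_toUnits_apply, Unitary.val_inv_toUnits_apply,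
    UnitaryGroup.inv_val] at hconj
  have hexp : NormedSpace.exp (RCLike.ofReal ∘ hA.eigenvalues : n → ℂ) =
      RCLike.ofReal ∘ Real.exp ∘ hA.eigenvalues := by
    funext i
    simp only [Complex.coe_algebraMap, Pi.coe_exp, Function.comp_apply, ← Complex.exp_eq_exp_ℂ,
      Complex.ofReal_exp]
  simp only [Unitary.conjStarAlgAut_apply]
  rw [hconj, exp_diagonal, hexp]

lemma exp_real_smul_eq_cfc (r : ℝ) :
    NormedSpace.exp ((r : ℂ) • A) = cfc (fun x => Real.exp (r * x)) A := by
  rw [Complex.coe_smul, ((IsSelfAdjoint.all r).smul hA.isSelfAdjoint).isHermitian.exp_eq_cfc]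
  exact (cfc_comp_smul r Real.exp A).symm

lemma re_trace_cfc (f : ℝ → ℝ) : (cfc f A).trace.re = ∑ i, f (hA.eigenvalues i) := by
  simp only [hA.trace_cfc, Complex.re_sum, Complex.coe_algebraMap, Complex.ofReal_re]

end IsHermitian

end Matrix

lemma mul_klFun_div (p : ℝ) {q : ℝ} (hq : 0 < q) :
    q * klFun (p / q) = p * Real.log p - p * Real.log q - p + q := by
  rcases eq_or_ne p 0 with rfl | hp
  · simp [klFun_zero]
  rw [klFun_apply, Real.log_div hp hq.ne']
  field_simp
  ring

lemma mul_klFun_div_nonneg {p q : ℝ} (hp : 0 ≤ p) (hq : 0 < q) : 0 ≤ q * klFun (p / q) :=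
  mul_nonneg hq.le (klFun_nonneg (div_nonneg hp hq.le))

lemma mul_klFun_div_eq_zero_iff {p q : ℝ} (hp : 0 ≤ p) (hq : 0 < q) :
    q * klFun (p / q) = 0 ↔ p = q := by
  rw [mul_eq_zero, or_iff_right hq.ne', klFun_eq_zero_iff (div_nonneg hp hq.le),
    div_eq_one_iff_eq hq.ne']

section Boltzmann

variable {n : Type*} [Fintype n]

noncomputable def boltzmann (β : ℝ) (ε : n → ℝ) (i : n) : ℝ :=
  Real.exp (-β * ε i) / ∑ j, Real.exp (-β * ε j)

variable [Nonempty n] (β : ℝ) (ε : n → ℝ)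

lemma sum_exp_neg_mul_pos : 0 < ∑ j, Real.exp (-β * ε j) :=
  Finset.sum_pos (fun _ _ => Real.exp_pos _) Finset.univ_nonempty

lemma boltzmann_pos (i : n) : 0 < boltzmann β ε i :=
  div_pos (Real.exp_pos _) (sum_exp_neg_mul_pos β ε)

lemma sum_boltzmann : ∑ i, boltzmann β ε i = 1 := by
  simp only [boltzmann]
  rw [← Finset.sum_div, div_self (sum_exp_neg_mul_pos β ε).ne']

lemma log_boltzmann (i : n) :
    Real.log (boltzmann β ε i) = -β * ε i - Real.log (∑ j, Real.exp (-β * ε j)) := by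
  rw [boltzmann, Real.log_div (Real.exp_pos _).ne' (sum_exp_neg_mul_pos β ε).ne', Real.log_exp]

end Boltzmann

section Gibbs

variable {n : Type*} [Fintype n] [DecidableEq n] {H : Matrix n n ℂ} (hH : H.IsHermitian) {β : ℝ}
include hH

lemma trace_exp_neg_smul : (NormedSpace.exp ((-β : ℂ) • H)).trace =
    ((∑ i, Real.exp (-β * hH.eigenvalues i) : ℝ) : ℂ) := by
  rw [← Complex.ofReal_neg, hH.exp_real_smul_eq_cfc, hH.trace_cfc, Complex.ofReal_sum]
  rfl

lemma freeEnergy_eq_neg_inv_mul_log_sum :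
    freeEnergy β H = -β⁻¹ * Real.log (∑ i, Real.exp (-β * hH.eigenvalues i)) := by
  rw [freeEnergy, trace_exp_neg_smul hH, Complex.ofReal_re]

lemma gibbs_eq_cfc :
    gibbs β H = cfc (fun x => Real.exp (-β * x) / ∑ i, Real.exp (-β * hH.eigenvalues i)) H := by
  simp only [div_eq_inv_mul]
  rw [cfc_const_mul _ (fun x => Real.exp (-β * x)) H, gibbs, trace_exp_neg_smul hH,
    ← Complex.ofReal_neg, hH.exp_real_smul_eq_cfc, ← Complex.ofReal_inv, Complex.coe_smul]

lemma vnEntropy_cfc (f : ℝ → ℝ) :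
    vnEntropy (cfc f H) = -∑ i, f (hH.eigenvalues i) * Real.log (f (hH.eigenvalues i)) := by
  have hf : (cfc f H).IsHermitian := IsSelfAdjoint.isHermitian (cfc_predicate f H)
  rw [vnEntropy, dif_pos hf, hH.sum_comp_eigenvalues_cfc f hf (fun x => x * Real.log x)]

variable [Nonempty n]

lemma isDensityMatrix_gibbs : IsDensityMatrix (gibbs β H) := by
  refine ⟨?_, ?_⟩
  · rw [gibbs_eq_cfc hH, ← nonneg_iff_posSemidef]
    exact cfc_nonneg fun x _ => div_nonneg (Real.exp_pos _).le (sum_exp_neg_mul_pos β _).le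
  · rw [gibbs_eq_cfc hH, hH.trace_cfc, ← RCLike.ofReal_sum]
    exact congrArg _ (sum_boltzmann β hH.eigenvalues)

lemma helmholtz_gibbs (hβ : β ≠ 0) : helmholtz H β (gibbs β H) = freeEnergy β H := by
  set ε := hH.eigenvalues
  set q := boltzmann β ε
  have htrace : (gibbs β H * H).trace.re = ∑ i, q i * ε i := by
    have hmul : gibbs β H * H =
        cfc (fun x => Real.exp (-β * x) / (∑ i, Real.exp (-β * ε i)) * x) H := by
      rw [cfc_mul (fun x => Real.exp (-β * x) / (∑ i, Real.exp (-β * ε i))) (fun x => x) H,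
        cfc_id' ℝ H, gibbs_eq_cfc hH]
    rw [hmul, hH.re_trace_cfc]
    rfl
  have hent : vnEntropy (gibbs β H) = -∑ i, q i * Real.log (q i) := by
    rw [gibbs_eq_cfc hH, vnEntropy_cfc hH]
    rfl
  have hlog : ∑ i, q i * Real.log (q i) =
      -β * ∑ i, q i * ε i - Real.log (∑ i, Real.exp (-β * ε i)) := by
    rw [Finset.mul_sum, ← one_mul (Real.log _), ← sum_boltzmann β ε, Finset.sum_mul,
      ← Finset.sum_sub_distrib]
    exact Finset.sum_congr rfl fun i _ => by rw [log_boltzmann]; ring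
  rw [helmholtz, htrace, hent, hlog, freeEnergy_eq_neg_inv_mul_log_sum hH]
  field_simp
  ring

lemma mul_helmholtz_sub_freeEnergy (hβ : β ≠ 0) {ρ : Matrix n n ℂ} (hρ : ρ.IsHermitian)
    (htr : ρ.trace = 1) :
    β * (helmholtz H β ρ - freeEnergy β H) =
      ∑ i, ∑ j, ‖(star (hρ.eigenvectorUnitary : Matrix n n ℂ) * hH.eigenvectorUnitary) i j‖ ^ 2 *
        (boltzmann β hH.eigenvalues j *
          klFun (hρ.eigenvalues i / boltzmann β hH.eigenvalues j)) := by
  set p := hρ.eigenvalues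
  set ε := hH.eigenvalues
  set q := boltzmann β ε
  set c : Matrix n n ℝ := of fun i j =>
    ‖(star (hρ.eigenvectorUnitary : Matrix n n ℂ) * hH.eigenvectorUnitary) i j‖ ^ 2
  set logZ := Real.log (∑ j, Real.exp (-β * ε j))
  have hc : c ∈ doublyStochastic ℝ n := norm_sq_mem_doublyStochastic
    (mul_mem (Unitary.star_mem hρ.eigenvectorUnitary.2) hH.eigenvectorUnitary.2)
  have hp : ∑ i, p i = 1 := by
    have h := hρ.trace_eq_sum_eigenvalues
    rw [htr, ← RCLike.ofReal_sum, ← RCLike.ofReal_one, RCLike.ofReal_inj] at h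
    exact h.symm
  have hS : vnEntropy ρ = -∑ i, p i * Real.log (p i) := by rw [vnEntropy, dif_pos hρ]
  have hF : freeEnergy β H = -β⁻¹ * logZ := freeEnergy_eq_neg_inv_mul_log_sum hH
  have htrace : (ρ * H).trace.re = ∑ i, ∑ j, c i j * (p i * ε j) := by
    simp only [hρ.trace_mul_eq_sum_norm_sq hH, Complex.coe_algebraMap, Complex.ofReal_re]
    rfl
  have hterm : ∀ i j, q j * klFun (p i / q j) =
      β * (p i * ε j) + ((p i * Real.log (p i) + p i * logZ - p i) + q j) := fun i j => by
    rw [mul_klFun_div _ (boltzmann_pos β ε j), log_boltzmann]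
    ring
  calc β * (helmholtz H β ρ - freeEnergy β H)
      = β * ∑ i, ∑ j, c i j * (p i * ε j) +
          (∑ i, (p i * Real.log (p i) + p i * logZ - p i) + ∑ j, q j) := by
        rw [helmholtz, htrace, hS, hF, sum_boltzmann, Finset.sum_sub_distrib,
          Finset.sum_add_distrib, ← Finset.sum_mul, hp]
        field_simp
        ring
    _ = ∑ i, ∑ j, c i j *
          (β * (p i * ε j) + ((p i * Real.log (p i) + p i * logZ - p i) + q j)) := by
        rw [← sum_sum_mul_add_of_mem_doublyStochastic hc]
        simp only [mul_add, Finset.sum_add_distrib, Finset.mul_sum, mul_left_comm β]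
    _ = ∑ i, ∑ j, c i j * (q j * klFun (p i / q j)) := by
        simp only [hterm]

variable {ρ : Matrix n n ℂ}

lemma freeEnergy_le_helmholtz (hβ : 0 < β) (hρ : IsDensityMatrix ρ) :
    freeEnergy β H ≤ helmholtz H β ρ := by
  have hnonneg : 0 ≤ β * (helmholtz H β ρ - freeEnergy β H) :=
    mul_helmholtz_sub_freeEnergy hH hβ.ne' hρ.1.isHermitian hρ.2 ▸
      Finset.sum_nonneg fun i _ => Finset.sum_nonneg fun j _ => mul_nonneg (sq_nonneg _)
        (mul_klFun_div_nonneg (hρ.1.eigenvalues_nonneg i) (boltzmann_pos β _ j))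
  exact sub_nonneg.mp ((mul_nonneg_iff_of_pos_left hβ).mp hnonneg)

lemma eq_gibbs_of_helmholtz_eq_freeEnergy (hβ : β ≠ 0) (hρ : IsDensityMatrix ρ)
    (h : helmholtz H β ρ = freeEnergy β H) : ρ = gibbs β H := by
  obtain ⟨hρ, htr⟩ := hρ
  have hsum := mul_helmholtz_sub_freeEnergy hH hβ hρ.isHermitian htr
  have hnonneg : ∀ i j, 0 ≤ ‖(star (hρ.isHermitian.eigenvectorUnitary : Matrix n n ℂ) *
      hH.eigenvectorUnitary) i j‖ ^ 2 * (boltzmann β hH.eigenvalues j *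
        klFun (hρ.isHermitian.eigenvalues i / boltzmann β hH.eigenvalues j)) :=
    fun i j => mul_nonneg (sq_nonneg _)
      (mul_klFun_div_nonneg (hρ.eigenvalues_nonneg i) (boltzmann_pos β _ j))
  rw [h, sub_self, mul_zero, eq_comm, Finset.sum_eq_zero_iff_of_nonneg fun i _ =>
    Finset.sum_nonneg fun j _ => hnonneg i j] at hsum
  have hzero : ∀ i j, (star (hρ.isHermitian.eigenvectorUnitary : Matrix n n ℂ) *
      hH.eigenvectorUnitary) i j = 0 ∨
        (hρ.isHermitian.eigenvalues i : ℂ) = boltzmann β hH.eigenvalues j := fun i j => by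
    have hij := (Finset.sum_eq_zero_iff_of_nonneg fun j _ => hnonneg i j).mp
      (hsum i (Finset.mem_univ _)) j (Finset.mem_univ _)
    rcases mul_eq_zero.mp hij with h0 | h0
    · exact Or.inl (by simpa using h0)
    · exact Or.inr (congrArg _
        ((mul_klFun_div_eq_zero_iff (hρ.eigenvalues_nonneg i) (boltzmann_pos β _ j)).mp h0))
  conv_lhs => rw [hρ.isHermitian.spectral_theorem]
  rw [gibbs_eq_cfc hH, hH.cfc_eq, Matrix.IsHermitian.cfc]
  simp only [Unitary.conjStarAlgAut_apply]
  exact conj_diagonal_eq_conj_diagonal hρ.isHermitian.eigenvectorUnitary.2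
    hH.eigenvectorUnitary.2 hzero

lemma freeEnergy_lt_helmholtz (hβ : 0 < β) (hρ : IsDensityMatrix ρ) (hne : ρ ≠ gibbs β H) :
    freeEnergy β H < helmholtz H β ρ :=
  (freeEnergy_le_helmholtz hH hβ hρ).lt_of_ne fun h =>
    hne (eq_gibbs_of_helmholtz_eq_freeEnergy hH hβ.ne' hρ h.symm)

end Gibbs

section Concavity

variable {n : Type*} [Fintype n] [DecidableEq n]

lemma helmholtz_smul_add_one_sub_smul (H₁ H₂ ρ : Matrix n n ℂ) (β t : ℝ) :
    helmholtz (t • H₁ + (1 - t) • H₂) β ρ =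
      t * helmholtz H₁ β ρ + (1 - t) * helmholtz H₂ β ρ := by
  simp only [helmholtz, Matrix.mul_add, Matrix.mul_smul, trace_add, trace_smul, Complex.add_re,
    Complex.real_smul, Complex.re_ofReal_mul]
  ring

lemma freeEnergy_strictConcave_of_gibbs_ne {H₁ H₂ : Matrix n n ℂ} (hH₁ : H₁.IsHermitian)
    (hH₂ : H₂.IsHermitian) {β : ℝ} (hβ : 0 < β) (hne : gibbs β H₁ ≠ gibbs β H₂) {t : ℝ}
    (ht : t ∈ Set.Ioo (0 : ℝ) 1) :
    t * freeEnergy β H₁ + (1 - t) * freeEnergy β H₂ < freeEnergy β (t • H₁ + (1 - t) • H₂) := by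
  have : Nonempty n := by
    by_contra h
    rw [not_nonempty_iff] at h
    exact hne (Subsingleton.elim _ _)
  have hH : (t • H₁ + (1 - t) • H₂).IsHermitian :=
    (hH₁.smul (IsSelfAdjoint.all t)).add (hH₂.smul (IsSelfAdjoint.all (1 - t)))
  set σ := gibbs β (t • H₁ + (1 - t) • H₂)
  have hσ : IsDensityMatrix σ := isDensityMatrix_gibbs hH
  rw [← helmholtz_gibbs hH hβ.ne', helmholtz_smul_add_one_sub_smul]
  have h₁ := freeEnergy_le_helmholtz hH₁ hβ hσ
  have h₂ := freeEnergy_le_helmholtz hH₂ hβ hσ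
  obtain ⟨ht₀, ht₁⟩ := ht
  by_cases hσ₁ : σ = gibbs β H₁
  · have := freeEnergy_lt_helmholtz hH₂ hβ hσ (hσ₁ ▸ hne)
    nlinarith
  · have := freeEnergy_lt_helmholtz hH₁ hβ hσ hσ₁
    nlinarith

end Concavity

theorem freeEnergy_strictConcave_general {d m : ℕ}
    (H₀ : Matrix (Fin d) (Fin d) ℂ) (hH₀ : H₀.IsHermitian) (β : ℝ) (hβ : 0 < β)
    (V : Matrix (Fin m) (Fin m) ℂ →ₗ[ℝ] Matrix (Fin d) (Fin d) ℂ)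
    (hVherm : ∀ v : Matrix (Fin m) (Fin m) ℂ, v.IsHermitian → (V v).IsHermitian)
    (hinj : ∀ v₁ v₂ : Matrix (Fin m) (Fin m) ℂ, v₁.IsHermitian → v₂.IsHermitian →
      v₁.trace = 0 → v₂.trace = 0 →
      gibbs β (H₀ + V v₁) = gibbs β (H₀ + V v₂) → v₁ = v₂)
    (v₁ v₂ : Matrix (Fin m) (Fin m) ℂ) (h₁ : v₁.IsHermitian) (h₂ : v₂.IsHermitian)
    (htr₁ : v₁.trace = 0) (htr₂ : v₂.trace = 0) (hne : v₁ ≠ v₂)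
    (t : ℝ) (ht : t ∈ Set.Ioo (0 : ℝ) 1) :
    t * freeEnergy β (H₀ + V v₁) + (1 - t) * freeEnergy β (H₀ + V v₂) <
      freeEnergy β (H₀ + V (t • v₁ + (1 - t) • v₂)) := by
  have hcomb : H₀ + V (t • v₁ + (1 - t) • v₂) = t • (H₀ + V v₁) + (1 - t) • (H₀ + V v₂) := by
    rw [map_add, map_smul, map_smul]
    module
  rw [hcomb]
  exact freeEnergy_strictConcave_of_gibbs_ne (hH₀.add (hVherm v₁ h₁)) (hH₀.add (hVherm v₂ h₂)) hβ
    (fun h => hne (hinj v₁ v₂ h₁ h₂ htr₁ htr₂ h)) ht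

/-- The function `v ↦ -β⁻¹ log Tr(e^{-β(H₀+V(v))})` is strictly concave on traceless Hermitian
potentials, assuming distinct traceless potentials give distinct Gibbs states. -/
theorem freeEnergy_strictConcave {d m : ℕ} (hd : 0 < d)
    (H₀ : Matrix (Fin d) (Fin d) ℂ) (hH₀ : H₀.IsHermitian) (β : ℝ) (hβ : 0 < β)
    (V : Matrix (Fin m) (Fin m) ℂ →ₗ[ℝ] Matrix (Fin d) (Fin d) ℂ)
    (hVherm : ∀ v : Matrix (Fin m) (Fin m) ℂ, v.IsHermitian → (V v).IsHermitian)
    (hinj : ∀ v₁ v₂ : Matrix (Fin m) (Fin m) ℂ, v₁.IsHermitian → v₂.IsHermitian →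
      v₁.trace = 0 → v₂.trace = 0 →
      gibbs β (H₀ + V v₁) = gibbs β (H₀ + V v₂) → v₁ = v₂)
    (v₁ v₂ : Matrix (Fin m) (Fin m) ℂ) (h₁ : v₁.IsHermitian) (h₂ : v₂.IsHermitian)
    (htr₁ : v₁.trace = 0) (htr₂ : v₂.trace = 0) (hne : v₁ ≠ v₂)
    (t : ℝ) (ht : t ∈ Set.Ioo (0 : ℝ) 1) :
    t * freeEnergy β (H₀ + V v₁) + (1 - t) * freeEnergy β (H₀ + V v₂) <
      freeEnergy β (H₀ + V (t • v₁ + (1 - t) • v₂)) :=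
  freeEnergy_strictConcave_general H₀ hH₀ β hβ V hVherm hinj v₁ v₂ h₁ h₂ htr₁ htr₂ hne t ht
end

section
/- Let F: X → ℝ ∪ {∞} be a convex function on a finite-dimensional real normed vector space X whose effective domain M is contained in an affine subspace a + L, with L the smallest such subspace. Then for each x in the relative interior of M, the set ∂_L F(x) of subgradients lying in L is nonempty. -/
open scoped RealInnerProductSpace Pointwise

/-- A convex function on a finite-dimensional inner product space has a subgradient at
any interior point of its domain. -/
lemma exists_subgradient_of_mem_interior
    {E : Type*} [NormedAddCommGroup E] [InnerProductSpace ℝ E] [FiniteDimensional ℝ E]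
    {s : Set E} {g : E → ℝ} (hg : ConvexOn ℝ s g) {x : E} (hx : x ∈ interior s) :
    ∃ h : E, ∀ y ∈ s, g x + ⟪h, y - x⟫ ≤ g y := by
  -- the open strict epigraph over the interior of s
  set A : Set (E × ℝ) := {p | p.1 ∈ interior s ∧ g p.1 < p.2} with hA
  have hgint : ConvexOn ℝ (interior s) g := hg.subset interior_subset hg.1.interior
  have hAopen : IsOpen A := by
    have hU : IsOpen ((interior s) ×ˢ (Set.univ : Set ℝ)) :=
      isOpen_interior.prod isOpen_univ
    have hcont : ContinuousOn (fun p : E × ℝ => p.2 - g p.1)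
        ((interior s) ×ˢ (Set.univ : Set ℝ)) := by
      apply ContinuousOn.sub
      · exact continuous_snd.continuousOn
      · exact (hgint.continuousOn isOpen_interior).comp continuous_fst.continuousOn
          (fun p hp => hp.1)
    have : A = ((interior s) ×ˢ (Set.univ : Set ℝ)) ∩
        (fun p : E × ℝ => p.2 - g p.1) ⁻¹' (Set.Ioi 0) := by
      ext p; constructor
      · rintro ⟨h1, h2⟩; exact ⟨⟨h1, trivial⟩, by simpa using h2⟩
      · rintro ⟨⟨h1, _⟩, h2⟩; exact ⟨h1, by simpa using h2⟩
    rw [this]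
    exact hcont.isOpen_inter_preimage hU isOpen_Ioi
  have hAconv : Convex ℝ A := by
    rintro ⟨v, t⟩ ⟨hv, hvt⟩ ⟨w, u⟩ ⟨hw, hwu⟩ a b ha hb hab
    refine ⟨hg.1.interior hv hw ha hb hab, ?_⟩
    have h1 : g (a • v + b • w) ≤ a * g v + b * g w :=
      hgint.2 hv hw ha hb hab
    have h2 : a * g v + b * g w < a * t + b * u := by
      rcases ha.lt_or_eq with ha' | ha'
      · rcases hb.lt_or_eq with hb' | hb'
        · exact add_lt_add (by nlinarith) (by nlinarith)
        · rw [← hb']; simp; nlinarith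
      · rw [← ha']; simp
        have : b = 1 := by rw [← ha'] at hab; linarith
        rw [this]; simpa using hwu
    calc g (a • v + b • w) ≤ a * g v + b * g w := h1
      _ < a * t + b * u := h2
  have hxA : (x, g x) ∉ A := fun h => lt_irrefl _ h.2
  obtain ⟨f, hf⟩ := geometric_hahn_banach_open_point hAconv hAopen hxA
  -- decompose f
  set c : ℝ := f (0, 1) with hc
  have hsplit : ∀ (v : E) (t : ℝ), f (v, t) = f (v, 0) + t * c := by
    intro v t
    have : (v, t) = (v, (0:ℝ)) + t • ((0:E), (1:ℝ)) := by
      simp [Prod.ext_iff]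
    rw [this, map_add, map_smul, smul_eq_mul, hc]
  have hcneg : c < 0 := by
    have h1 : (x, g x + 1) ∈ A := ⟨hx, show g x < g x + 1 by linarith⟩
    have := hf _ h1
    rw [hsplit x (g x + 1), hsplit x (g x)] at this
    nlinarith
  -- key inequality on the interior
  have hkey : ∀ v ∈ interior s, f (v, 0) + g v * c ≤ f (x, 0) + g x * c := by
    intro v hv
    by_contra hcon
    push_neg at hcon
    set K := f (x, 0) + g x * c with hK
    set A0 := f (v, 0) + g v * c with hA0
    have hδ : ∀ δ : ℝ, 0 < δ → A0 + δ * c < K := by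
      intro δ hδ
      have h1 : (v, g v + δ) ∈ A := ⟨hv, show g v < g v + δ by linarith⟩
      have := hf _ h1
      rw [hsplit v (g v + δ), hsplit x (g x)] at this
      rw [hA0, hK]; nlinarith
    have := hδ ((A0 - K) / (-2 * c)) (div_pos (by linarith) (by linarith))
    have hc2 : ((A0 - K) / (-2 * c)) * c = -(A0 - K) / 2 := by
      rw [div_mul_eq_mul_div, div_eq_div_iff (by linarith) (by norm_num)]
      ring
    rw [hc2] at this
    linarith
  -- the candidate linear functional evaluated at v: f(v,0)/(-c)
  have hsub_int : ∀ v ∈ interior s, g x + (f (v, 0) - f (x, 0)) / (-c) ≤ g v := by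
    intro v hv
    have h := hkey v hv
    have hcpos : (0:ℝ) < -c := by linarith
    have h2 : (f (v, 0) - f (x, 0)) / (-c) ≤ g v - g x := by
      rw [div_le_iff₀ hcpos]
      nlinarith
    linarith
  -- extend to all of s by moving along segments toward x
  have hsub : ∀ v ∈ s, g x + (f (v, 0) - f (x, 0)) / (-c) ≤ g v := by
    intro v hv
    have hseg : ∀ θ : ℝ, 0 < θ → θ < 1 →
        g x + (f ((1 - θ) • x + θ • v, 0) - f (x, 0)) / (-c)
          ≤ g ((1 - θ) • x + θ • v) := by
      intro θ hθ0 hθ1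
      exact hsub_int _ (hg.1.combo_interior_self_mem_interior hx hv
        (by linarith) hθ0.le (by ring))
    -- take θ → 1 would be analytic; instead use convexity algebraically
    by_contra hcon
    push_neg at hcon
    -- pick θ close to 1
    set D := g v - (g x + (f (v, 0) - f (x, 0)) / (-c)) with hD
    have hDneg : D < 0 := by rw [hD]; linarith
    -- for θ ∈ (0,1):
    -- g((1-θ)x + θv) ≤ (1-θ)g x + θ g v
    -- f((1-θ)x+θv, 0) = (1-θ) f(x,0) + θ f(v,0)
    have : ∀ θ : ℝ, 0 < θ → θ < 1 → (0:ℝ) ≤ θ * D := by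
      intro θ hθ0 hθ1
      have h1 := hseg θ hθ0 hθ1
      have h2 : g ((1 - θ) • x + θ • v) ≤ (1 - θ) * g x + θ * g v :=
        hg.2 (interior_subset hx) hv (by linarith) hθ0.le (by ring)
      have h3 : f ((1 - θ) • x + θ • v, 0) = (1 - θ) * f (x, 0) + θ * f (v, 0) := by
        have : ((1 - θ) • x + θ • v, (0:ℝ)) =
            (1 - θ) • ((x, (0:ℝ)) : E × ℝ) + θ • ((v, (0:ℝ)) : E × ℝ) := by
          simp [Prod.ext_iff]
        rw [this, map_add, map_smul, map_smul, smul_eq_mul, smul_eq_mul]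
      rw [h3] at h1
      have hne : -c > 0 := by linarith
      rw [hD]
      have h4 : ((1 - θ) * f (x, 0) + θ * f (v, 0) - f (x, 0)) / (-c)
          = θ * ((f (v, 0) - f (x, 0)) / (-c)) := by
        rw [← mul_div_assoc]
        congr 1
        ring
      rw [h4] at h1
      nlinarith
    have := this (1/2) (by norm_num) (by norm_num)
    nlinarith
  -- convert to a vector via Riesz representation
  set φ : E →L[ℝ] ℝ := (-c)⁻¹ • (f.comp (ContinuousLinearMap.inl ℝ E ℝ)) with hφ
  refine ⟨(InnerProductSpace.toDual ℝ E).symm φ, fun y hy => ?_⟩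
  have hφv : ∀ v : E, φ v = f (v, 0) / (-c) := by
    intro v
    simp [hφ, div_eq_inv_mul]
  rw [InnerProductSpace.toDual_symm_apply]
  have := hsub y hy
  rw [map_sub, hφv y, hφv x]
  have : f (y, 0) / (-c) - f (x, 0) / (-c) = (f (y, 0) - f (x, 0)) / (-c) := by ring
  rw [this]
  exact hsub y hy


/-- Let `F` be a convex function on a finite-dimensional real inner product space whose
(effective) domain `M` lies in an affine subspace `a + L`, with `L` the smallest such linear
subspace. Then at every point of the relative interior of `M` the relative subdifferential
`∂_L F(x)` is nonempty. -/
theorem relative_subdifferential_nonempty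
    {X : Type*} [NormedAddCommGroup X] [InnerProductSpace ℝ X] [FiniteDimensional ℝ X]
    (M : Set X) (F : X → ℝ) (hconv : ConvexOn ℝ M F)
    (L : Submodule ℝ X) (a : X) (hML : M ⊆ a +ᵥ (L : Set X))
    (hmin : ∀ (L' : Submodule ℝ X) (a' : X), M ⊆ a' +ᵥ (L' : Set X) → L ≤ L')
    (x : X) (hx : x ∈ M)
    (hri : ∃ ε > 0, ∀ y ∈ a +ᵥ (L : Set X), ‖y - x‖ < ε → y ∈ M) :
    ∃ h ∈ L, ∀ y ∈ M, F x + ⟪h, y - x⟫ ≤ F y := by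
  obtain ⟨ε, hε, hball⟩ := hri
  obtain ⟨l, hlL, hl⟩ := hML hx
  -- work inside the subspace L
  set s : Set ↥L := {v | x + (v : X) ∈ M} with hs
  set g : ↥L → ℝ := fun v => F (x + (v : X)) with hg
  have hsub : ∀ (y : X), y ∈ M → y - x ∈ L := by
    intro y hy
    obtain ⟨m, hmL, hm⟩ := hML hy
    simp only [vadd_eq_add] at hm
    have hl' : a + l = x := hl
    have : y - x = m - l := by
      rw [← hm, ← hl']; abel
    rw [this]
    exact sub_mem hmL hlL
  have hgconv : ConvexOn ℝ s g := by
    constructor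
    · intro v hv w hw p q hp hq hpq
      show x + ((p • v + q • w : ↥L) : X) ∈ M
      have : x + ((p • v + q • w : ↥L) : X) = p • (x + (v : X)) + q • (x + (w : X)) := by
        push_cast
        calc x + (p • (v : X) + q • (w : X))
            = (p + q) • x + (p • (v : X) + q • (w : X)) := by rw [hpq, one_smul]
          _ = p • (x + (v : X)) + q • (x + (w : X)) := by
              rw [add_smul, smul_add, smul_add]; abel
      rw [this]
      exact hconv.1 hv hw hp hq hpq
    · intro v hv w hw p q hp hq hpq
      show F (x + ((p • v + q • w : ↥L) : X)) ≤ p * F (x + (v : X)) + q * F (x + (w : X))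
      have : x + ((p • v + q • w : ↥L) : X) = p • (x + (v : X)) + q • (x + (w : X)) := by
        push_cast
        calc x + (p • (v : X) + q • (w : X))
            = (p + q) • x + (p • (v : X) + q • (w : X)) := by rw [hpq, one_smul]
          _ = p • (x + (v : X)) + q • (x + (w : X)) := by
              rw [add_smul, smul_add, smul_add]; abel
      rw [this]
      exact hconv.2 hv hw hp hq hpq
  have h0int : (0 : ↥L) ∈ interior s := by
    rw [mem_interior]
    refine ⟨Metric.ball 0 ε, ?_, Metric.isOpen_ball, by simpa using hε⟩
    intro v hv
    show x + (v : X) ∈ M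
    apply hball
    · exact ⟨l + v, add_mem hlL v.2, by rw [← hl]; simp [add_assoc]⟩
    · have : x + (v : X) - x = (v : X) := by abel
      rw [this]
      simpa using (mem_ball_zero_iff.mp hv)
  obtain ⟨h₀, hh₀⟩ := exists_subgradient_of_mem_interior hgconv h0int
  refine ⟨(h₀ : X), h₀.2, ?_⟩
  intro y hy
  set v : ↥L := ⟨y - x, hsub y hy⟩ with hv
  have hvs : v ∈ s := by
    show x + (y - x) ∈ M
    have : x + (y - x) = y := by abel
    rwa [this]
  have := hh₀ v hvs
  rw [sub_zero] at this
  have e1 : g 0 = F x := by simp [hg]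
  have e2 : g v = F y := by
    simp only [hg, hv]
    congr 1
    abel
  have e3 : ⟪h₀, v⟫ = ⟪(h₀ : X), y - x⟫ := by
    rw [Submodule.coe_inner]
  rw [e1, e2, e3] at this
  exact this
end

section
/- Let F be a convex function on a finite-dimensional real inner product space whose domain lies in an affine subspace a + L. If the relative subdifferential ∂_L F(x) at a relative-interior point x contains exactly one element h, then F is differentiable at x along L (i.e., F(x+u) - F(x) - ⟨h,u⟩ = o(‖u‖) for u ∈ L) with gradient h. -/
open scoped RealInnerProductSpace Pointwise

/-!
The one-sided directional derivative `f'(x; ·)` of a convex function at an interior point is a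
finite sublinear functional lying above every subgradient. By Hahn–Banach, for each `v` some linear
functional below `f'(x; ·)` attains `f'(x; v)`; by Riesz it is a subgradient, hence the unique one
`g`, so `f'(x; v) = ⟪g, v⟫` in every direction. Convexity upgrades this to a uniform estimate: every
small `u` lies in the copy of a fixed simplex around `0` scaled by `‖u‖`, and there the convex
remainder `f (x + u) - f x - ⟪g, u⟫` is bounded by its values at the finitely many vertices.
Restricting `F` to the affine subspace `x + L` reduces the theorem to this interior statement.
-/

open Set Filter Topology

section DirDeriv

variable {E : Type*} [AddCommGroup E] [Module ℝ E] {f : E → ℝ} {s : Set E} {x u v : E}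

def dirSlopes (f : E → ℝ) (s : Set E) (x v : E) : Set ℝ :=
  (fun t => (f (x + t • v) - f x) / t) '' {t | 0 < t ∧ x + t • v ∈ s}

/-- For convex `f` this is the one-sided directional derivative `f'(x; v)`. -/
noncomputable def dirDeriv (f : E → ℝ) (s : Set E) (x v : E) : ℝ :=
  sInf (dirSlopes f s x v)

lemma dirDeriv_le_slope (hb : BddBelow (dirSlopes f s x v)) {t : ℝ} (ht : 0 < t)
    (hxt : x + t • v ∈ s) : dirDeriv f s x v ≤ (f (x + t • v) - f x) / t :=
  csInf_le hb ⟨t, ⟨ht, hxt⟩, rfl⟩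

lemma dirSlopes_smul {c : ℝ} (hc : 0 < c) : dirSlopes f s x (c • v) = c • dirSlopes f s x v := by
  ext r
  simp only [dirSlopes, Set.mem_smul_set, Set.mem_image, Set.mem_ofPred_eq, smul_eq_mul]
  constructor
  · rintro ⟨t, ⟨ht, hxt⟩, rfl⟩
    refine ⟨_, ⟨t * c, ⟨by positivity, by rwa [mul_smul]⟩, rfl⟩, ?_⟩
    rw [mul_smul]
    field_simp
  · rintro ⟨_, ⟨t, ⟨ht, hxt⟩, rfl⟩, rfl⟩
    refine ⟨t / c, ⟨by positivity, ?_⟩, ?_⟩ <;> rw [smul_smul, div_mul_cancel₀ t hc.ne']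
    · exact hxt
    · field_simp

lemma dirDeriv_smul {c : ℝ} (hc : 0 < c) : dirDeriv f s x (c • v) = c * dirDeriv f s x v := by
  rw [dirDeriv, dirSlopes_smul hc, Real.sInf_smul_of_nonneg hc.le, smul_eq_mul, dirDeriv]

lemma dirDeriv_zero : dirDeriv f s x 0 = 0 := by
  have h := dirDeriv_smul (f := f) (s := s) (x := x) (v := 0) two_pos
  rw [smul_zero] at h
  linarith

/-- The witness is `t = t₁ t₂ / (t₁ + t₂)`: then `x + t • (u + v)` is the convex combination of
`x + t₁ • u` and `x + t₂ • v` with weights `t / t₁` and `t / t₂`. -/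
lemma ConvexOn.exists_slope_add_le (hf : ConvexOn ℝ s f) {t₁ t₂ : ℝ} (ht₁ : 0 < t₁) (ht₂ : 0 < t₂)
    (hu : x + t₁ • u ∈ s) (hv : x + t₂ • v ∈ s) :
    ∃ t > 0, x + t • (u + v) ∈ s ∧
      (f (x + t • (u + v)) - f x) / t ≤
        (f (x + t₁ • u) - f x) / t₁ + (f (x + t₂ • v) - f x) / t₂ := by
  set t := t₁ * t₂ / (t₁ + t₂) with ht_def
  have ht : 0 < t := by positivity
  have hw : t / t₁ + t / t₂ = 1 := by rw [ht_def]; field_simp; ring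
  have hcomb : (t / t₁) • (x + t₁ • u) + (t / t₂) • (x + t₂ • v) = x + t • (u + v) := by
    rw [smul_add, smul_add, smul_smul, smul_smul, div_mul_cancel₀ t ht₁.ne',
      div_mul_cancel₀ t ht₂.ne', smul_add, add_add_add_comm, ← add_smul, hw, one_smul]
  have hmem := hf.1 hu hv (by positivity) (by positivity) hw
  have hle := hf.2 hu hv (by positivity) (by positivity) hw
  rw [hcomb, smul_eq_mul, smul_eq_mul] at hle
  rw [hcomb] at hmem
  refine ⟨t, ht, hmem, ?_⟩
  rw [div_le_iff₀ ht]
  linear_combination hle + f x * hw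

lemma ConvexOn.dirDeriv_add_le (hf : ConvexOn ℝ s f) (hu : (dirSlopes f s x u).Nonempty)
    (hv : (dirSlopes f s x v).Nonempty) (hb : BddBelow (dirSlopes f s x (u + v))) :
    dirDeriv f s x (u + v) ≤ dirDeriv f s x u + dirDeriv f s x v := by
  have hpair : ∀ r ∈ dirSlopes f s x u, ∀ r' ∈ dirSlopes f s x v,
      dirDeriv f s x (u + v) ≤ r + r' := by
    rintro _ ⟨t₁, ⟨ht₁, hxu⟩, rfl⟩ _ ⟨t₂, ⟨ht₂, hxv⟩, rfl⟩
    obtain ⟨t, ht, hxt, hle⟩ := hf.exists_slope_add_le ht₁ ht₂ hxu hxv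
    exact (dirDeriv_le_slope hb ht hxt).trans hle
  have hfix : ∀ r' ∈ dirSlopes f s x v, dirDeriv f s x (u + v) - r' ≤ dirDeriv f s x u :=
    fun r' hr' => le_csInf hu fun r hr => by linarith [hpair r hr r' hr']
  have : dirDeriv f s x (u + v) - dirDeriv f s x u ≤ dirDeriv f s x v :=
    le_csInf hv fun r' hr' => by linarith [hfix r' hr']
  linarith

lemma dirSlopes_nonempty [TopologicalSpace E] [ContinuousAdd E] [ContinuousSMul ℝ E]
    (hs : s ∈ 𝓝 x) (v : E) : (dirSlopes f s x v).Nonempty := by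
  have hline : Tendsto (fun t : ℝ => x + t • v) (𝓝[>] 0) (𝓝 x) := by
    have : Continuous (fun t : ℝ => x + t • v) := by fun_prop
    simpa using (this.tendsto 0).mono_left nhdsWithin_le_nhds
  obtain ⟨t, hxt, ht⟩ := ((hline.eventually hs).and self_mem_nhdsWithin).exists
  exact ⟨_, t, ⟨ht, hxt⟩, rfl⟩

end DirDeriv

section Subgradient

variable {E : Type*} [NormedAddCommGroup E] [InnerProductSpace ℝ E] {f : E → ℝ} {s : Set E}
  {x g v : E}

def subgradients (f : E → ℝ) (s : Set E) (x : E) : Set E :=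
  {h | ∀ y ∈ s, f x + ⟪h, y - x⟫ ≤ f y}

lemma inner_le_slope (hg : g ∈ subgradients f s x) {t : ℝ} (ht : 0 < t) (hxt : x + t • v ∈ s) :
    ⟪g, v⟫ ≤ (f (x + t • v) - f x) / t := by
  have h := hg _ hxt
  rw [add_sub_cancel_left, real_inner_smul_right] at h
  rw [le_div_iff₀ ht]
  linarith

lemma bddBelow_dirSlopes (hg : g ∈ subgradients f s x) (v : E) : BddBelow (dirSlopes f s x v) :=
  ⟨⟪g, v⟫, by rintro _ ⟨t, ⟨ht, hxt⟩, rfl⟩; exact inner_le_slope hg ht hxt⟩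

lemma inner_le_dirDeriv (hs : s ∈ 𝓝 x) (hg : g ∈ subgradients f s x) (v : E) :
    ⟪g, v⟫ ≤ dirDeriv f s x v :=
  le_csInf (dirSlopes_nonempty hs v) fun _ ⟨_, ⟨ht, hxt⟩, hr⟩ => hr ▸ inner_le_slope hg ht hxt

lemma mul_dirDeriv_le_dirDeriv_smul (hs : s ∈ 𝓝 x) (hg : g ∈ subgradients f s x) (c : ℝ) :
    c * dirDeriv f s x v ≤ dirDeriv f s x (c • v) := by
  rcases lt_trichotomy c 0 with hc | rfl | hc
  · have hsum : 0 ≤ dirDeriv f s x v + dirDeriv f s x (-v) := by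
      linarith [inner_le_dirDeriv hs hg v, inner_le_dirDeriv hs hg (-v),
        (inner_neg_right g v : ⟪g, -v⟫ = -⟪g, v⟫)]
    rw [← neg_smul_neg, dirDeriv_smul (neg_pos.2 hc)]
    nlinarith
  · simp [dirDeriv_zero]
  · rw [dirDeriv_smul hc]

theorem ConvexOn.exists_mem_subgradients_inner_eq_dirDeriv [FiniteDimensional ℝ E]
    (hf : ConvexOn ℝ s f) (hs : s ∈ 𝓝 x) (hg : g ∈ subgradients f s x) (v : E) :
    ∃ h ∈ subgradients f s x, ⟪h, v⟫ = dirDeriv f s x v := by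
  rcases eq_or_ne v 0 with rfl | hv
  · exact ⟨g, hg, by rw [inner_zero_right, dirDeriv_zero]⟩
  obtain ⟨ℓ, hℓv, hℓ⟩ := exists_extension_of_le_sublinear
    (LinearPMap.mkSpanSingleton v (dirDeriv f s x v) hv) (dirDeriv f s x)
    (fun c hc w => dirDeriv_smul hc)
    (fun u w => hf.dirDeriv_add_le (dirSlopes_nonempty hs u) (dirSlopes_nonempty hs w)
      (bddBelow_dirSlopes hg _))
    (by
      rintro ⟨_, hw⟩
      obtain ⟨c, rfl⟩ := Submodule.mem_span_singleton.1 hw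
      rw [LinearPMap.mkSpanSingleton'_apply, smul_eq_mul]
      exact mul_dirDeriv_le_dirDeriv_smul hs hg c)
  set h := (InnerProductSpace.toDual ℝ E).symm (LinearMap.toContinuousLinearMap ℓ)
  have hh : ∀ w, ⟪h, w⟫ = ℓ w := fun w => InnerProductSpace.toDual_symm_apply
  refine ⟨h, fun y hy => ?_, ?_⟩
  · have hslope := (hℓ (y - x)).trans
      (dirDeriv_le_slope (bddBelow_dirSlopes hg _) one_pos (by simpa using hy))
    rw [hh]
    simp only [one_smul, add_sub_cancel, div_one] at hslope
    linarith
  · rw [hh, hℓv ⟨v, Submodule.mem_span_singleton_self v⟩, LinearPMap.mkSpanSingleton_apply]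

theorem ConvexOn.dirDeriv_eq_inner [FiniteDimensional ℝ E] (hf : ConvexOn ℝ s f) (hs : s ∈ 𝓝 x)
    (hg : subgradients f s x = {g}) (v : E) : dirDeriv f s x v = ⟪g, v⟫ := by
  obtain ⟨h, hh, hhv⟩ :=
    hf.exists_mem_subgradients_inner_eq_dirDeriv hs (hg.ge (mem_singleton g)) v
  rw [hg] at hh
  rw [← hhv, hh]

end Subgradient

lemma ConvexOn.map_smul_le {E : Type*} [AddCommGroup E] [Module ℝ E] {T : Set E} {ψ : E → ℝ}
    (hψ : ConvexOn ℝ T ψ) (h0 : 0 ∈ T) (hψ0 : ψ 0 ≤ 0) {w : E} (hw : w ∈ T) {c : ℝ}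
    (hc : c ∈ Icc 0 1) : ψ (c • w) ≤ c * ψ w := by
  have h := hψ.2 h0 hw (sub_nonneg.2 hc.2) hc.1 (sub_add_cancel 1 c)
  rw [smul_zero, zero_add, smul_eq_mul, smul_eq_mul] at h
  nlinarith [mul_nonpos_of_nonneg_of_nonpos (sub_nonneg.2 hc.2) hψ0]

theorem ConvexOn.eventually_le_mul_norm {E : Type*} [NormedAddCommGroup E] [NormedSpace ℝ E]
    [FiniteDimensional ℝ E] {T : Set E} {ψ : E → ℝ} (hψ : ConvexOn ℝ T ψ) (hT : T ∈ 𝓝 0)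
    (hψ0 : ψ 0 ≤ 0) (hdir : ∀ v, ∀ ε > 0, ∃ t > 0, t • v ∈ T ∧ ψ (t • v) ≤ ε * t) {ε : ℝ}
    (hε : 0 < ε) : ∀ᶠ u in 𝓝 0, ψ u ≤ ε * ‖u‖ := by
  have h0 : (0 : E) ∈ T := mem_of_mem_nhds hT
  obtain ⟨b, hb, -⟩ := exists_mem_interior_convexHull_affineBasis (univ_mem (f := 𝓝 (0 : E)))
  obtain ⟨r, hr, hball⟩ := Metric.nhds_basis_closedBall.mem_iff.1 (mem_interior_iff_mem_nhds.1 hb)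
  have hray : ∀ i, ∀ᶠ t in 𝓝[>] 0, t • b i ∈ T ∧ ψ (t • b i) ≤ ε * r * t := by
    intro i
    obtain ⟨t₀, ht₀, hT₀, hψ₀⟩ := hdir (b i) (ε * r) (by positivity)
    filter_upwards [Ioc_mem_nhdsGT ht₀] with t ht
    have hc : t / t₀ ∈ Icc (0 : ℝ) 1 := ⟨div_nonneg ht.1.le ht₀.le, div_le_one_of_le₀ ht.2 ht₀.le⟩
    rw [show t • b i = (t / t₀) • t₀ • b i by rw [smul_smul, div_mul_cancel₀ t ht₀.ne']]
    refine ⟨hψ.1.smul_mem_of_zero_mem h0 hT₀ hc, (hψ.map_smul_le h0 hψ0 hT₀ hc).trans ?_⟩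
    calc t / t₀ * ψ (t₀ • b i) ≤ t / t₀ * (ε * r * t₀) := by gcongr; exact hc.1
      _ = ε * r * t := by field_simp
  obtain ⟨τ, hτ, hτray⟩ := mem_nhdsGT_iff_exists_Ioo_subset.1 (eventually_all.2 hray)
  filter_upwards [Metric.ball_mem_nhds 0 (mul_pos hr hτ)] with u hu
  rcases eq_or_ne u 0 with rfl | hu0
  · simpa using hψ0
  set t := ‖u‖ / r with ht_def
  have ht : t ∈ Ioo 0 τ :=
    ⟨by positivity, by rw [div_lt_iff₀ hr, mul_comm]; simpa using hu⟩
  have hut : u ∈ convexHull ℝ (t • range b) := by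
    rw [convexHull_smul]
    refine ⟨t⁻¹ • u, hball ?_, smul_inv_smul₀ ht.1.ne' u⟩
    rw [mem_closedBall_zero_iff, norm_smul, norm_inv, Real.norm_of_nonneg ht.1.le, ht_def]
    field_simp; exact le_rfl
  obtain ⟨_, ⟨_, ⟨i, rfl⟩, rfl⟩, hle⟩ := hψ.exists_ge_of_mem_convexHull
    (by rintro _ ⟨_, ⟨i, rfl⟩, rfl⟩; exact (hτray ht i).1) hut
  calc ψ u ≤ ψ (t • b i) := hle
    _ ≤ ε * r * t := (hτray ht i).2
    _ = ε * ‖u‖ := by rw [ht_def]; field_simp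

theorem ConvexOn.hasGradientAt_of_subgradients_eq_singleton {E : Type*} [NormedAddCommGroup E]
    [InnerProductSpace ℝ E] [FiniteDimensional ℝ E] {f : E → ℝ} {s : Set E} {x g : E}
    (hf : ConvexOn ℝ s f) (hs : s ∈ 𝓝 x) (hg : subgradients f s x = {g}) :
    HasGradientAt f g x := by
  have hgs : g ∈ subgradients f s x := hg.ge (mem_singleton g)
  set T := (fun u => x + u) ⁻¹' s
  have hT : T ∈ 𝓝 0 := by
    refine (continuous_const.add continuous_id).continuousAt.preimage_mem_nhds ?_
    simpa using hs
  have hψ : ConvexOn ℝ T (fun u => f (x + u) - f x - ⟪g, u⟫) := by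
    have haffine : ConcaveOn ℝ T (fun u => ⟪g, u⟫ + f x) :=
      ((innerₛₗ ℝ g).concaveOn (hf.1.translate_preimage_right x)).add_const (f x)
    refine ((hf.translate_right x).sub haffine).congr fun u _ => ?_
    simp only [Pi.sub_apply, Function.comp_apply]
    ring
  have hdir : ∀ v, ∀ ε > 0, ∃ t > 0, x + t • v ∈ s ∧ f (x + t • v) - f x - ⟪g, t • v⟫ ≤ ε * t := by
    intro v ε hε
    obtain ⟨_, ⟨t, ⟨ht, hxt⟩, rfl⟩, hlt⟩ := exists_lt_of_csInf_lt (dirSlopes_nonempty hs v)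
      (by rw [← dirDeriv, hf.dirDeriv_eq_inner hs hg v]; exact lt_add_of_pos_right _ hε)
    refine ⟨t, ht, hxt, ?_⟩
    rw [div_lt_iff₀ ht] at hlt
    rw [real_inner_smul_right]
    linarith
  rw [hasGradientAt_iff_isLittleO_nhds_zero, Asymptotics.isLittleO_iff]
  intro ε hε
  filter_upwards [hψ.eventually_le_mul_norm hT (by simp) hdir hε, hT] with u hle hu
  have hlow := hgs (x + u) hu
  rw [add_sub_cancel_left] at hlow
  rw [Real.norm_eq_abs, abs_of_nonneg (by linarith)]
  exact hle

lemma mem_subgradients_restrict_iff {X : Type*} [NormedAddCommGroup X] [InnerProductSpace ℝ X]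
    {M : Set X} {F : X → ℝ} {L : Submodule ℝ X} {x : X} (hM : ∀ y ∈ M, y - x ∈ L) (h : L) :
    h ∈ subgradients (fun u : L => F (x + u)) {u : L | x + u ∈ M} 0 ↔
      ∀ y ∈ M, F x + ⟪(h : X), y - x⟫ ≤ F y := by
  simp only [subgradients, mem_ofPred_eq, sub_zero, ZeroMemClass.coe_zero, add_zero,
    Submodule.coe_inner]
  constructor
  · intro H y hy
    simpa using H ⟨y - x, hM y hy⟩ (by simpa using hy)
  · exact fun H u hu => by simpa using H _ hu

/-- If the relative subdifferential `∂_L F(x)` of a convex function `F` (with domain `M` contained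
in the affine subspace `a + L`) at a relative-interior point `x` contains exactly one element `g`,
then `F` is differentiable at `x` along `L` with gradient `g`:
`F(x+u) - F(x) - ⟪g,u⟫ = o(‖u‖)` for `u ∈ L`. -/
theorem unique_relative_subgradient_differentiable
    {X : Type*} [NormedAddCommGroup X] [InnerProductSpace ℝ X] [FiniteDimensional ℝ X]
    (M : Set X) (F : X → ℝ) (hconv : ConvexOn ℝ M F)
    (L : Submodule ℝ X) (a : X) (hML : M ⊆ a +ᵥ (L : Set X))
    (x : X) (hx : x ∈ M)
    (hri : ∃ ε > 0, ∀ y ∈ a +ᵥ (L : Set X), ‖y - x‖ < ε → y ∈ M)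
    (g : X)
    (hunique : {h : X | h ∈ L ∧ ∀ y ∈ M, F x + ⟪h, y - x⟫ ≤ F y} = {g}) :
    ∀ ε > 0, ∃ δ > 0, ∀ u ∈ L, ‖u‖ < δ → x + u ∈ M →
      |F (x + u) - F x - ⟪g, u⟫| ≤ ε * ‖u‖ := by
  obtain ⟨r, hr, hball⟩ := hri
  have hxL : -a + x ∈ L := mem_vadd_set_iff_neg_vadd_mem.1 (hML hx)
  have hML' : ∀ y ∈ M, y - x ∈ L := fun y hy => by
    simpa using L.sub_mem (mem_vadd_set_iff_neg_vadd_mem.1 (hML hy)) hxL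
  have hgL : g ∈ L := ((Set.ext_iff.1 hunique g).2 rfl).1
  have hs : {u : L | x + u ∈ M} ∈ 𝓝 0 := Metric.mem_nhds_iff.2 ⟨r, hr, fun u hu => hball _
    (mem_vadd_set_iff_neg_vadd_mem.2 (by simpa [add_assoc] using L.add_mem hxL u.2))
    (by simpa using hu)⟩
  have hg : subgradients (fun u : L => F (x + u)) {u : L | x + u ∈ M} 0 = {⟨g, hgL⟩} := by
    ext h
    rw [mem_subgradients_restrict_iff hML', mem_singleton_iff, Subtype.ext_iff]
    simpa [h.2] using Set.ext_iff.1 hunique h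
  have hgrad := ((hconv.translate_right x).comp_linearMap L.subtype
    ).hasGradientAt_of_subgradients_eq_singleton hs hg
  intro ε hε
  obtain ⟨δ, hδ, hδε⟩ := Metric.eventually_nhds_iff.1
    ((hasGradientAt_iff_isLittleO_nhds_zero.1 hgrad).def hε)
  exact ⟨δ, hδ, fun u hu hδu _ => by simpa using hδε (y := ⟨u, hu⟩) (by simpa using hδu)⟩
end

section
/- (Coleman, fermionic case) For every Hermitian N_b×N_b matrix γ with 0 ≤ γ ≤ 1 and Tr γ = N (N ≤ N_b), there exists a density matrix ρ on ∧^N ℂ^{N_b} whose 1RDM is γ. Equivalently: any vector of occupation numbers n ∈ [0,1]^{N_b} with ∑nᵢ = N is a convex combination of 0/1 vectors each having exactly N ones (the extreme points of the polytope), so γ arises from a convex combination of Slater-determinant projectors in the natural-orbital basis. -/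
open Matrix BigOperators
open scoped ComplexOrder

/-- Occupation-number basis configurations of the fermionic `N`-particle space `⋀^N ℂ^{N_b}`:
subsets of `N` occupied orbitals out of `N_b`. -/
abbrev FConfig (Nb N : ℕ) := {s : Finset (Fin Nb) // s.card = N}

/-- Matrix of the operator `aᵢ† aⱼ` (create orbital `i`, annihilate orbital `j`) on the fermionic
`N`-particle space, in the occupation-number basis, with the standard Jordan–Wigner signs. -/
noncomputable def fOp {Nb N : ℕ} (i j : Fin Nb) :
    Matrix (FConfig Nb N) (FConfig Nb N) ℂ := fun s t =>
  if j ∈ t.1 ∧ (i = j ∨ i ∉ t.1) ∧ s.1 = insert i (t.1.erase j) then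
    (-1 : ℂ) ^ ((t.1.filter (fun k => k < j)).card + ((t.1.erase j).filter (fun k => k < i)).card)
  else 0

/-- The 1RDM of a fermionic `N`-particle density matrix: `γᵢⱼ = Tr(ρ aⱼ† aᵢ)`. -/
noncomputable def gammaF {Nb N : ℕ} (ρ : Matrix (FConfig Nb N) (FConfig Nb N) ℂ) :
    Matrix (Fin Nb) (Fin Nb) ℂ := fun i j => (ρ * fOp j i).trace

/-!
Diagonalize `γ = U diag(n) Uᴴ`. The eigenvalues `n` lie in the polytope `[0,1]^{N_b} ∩ {∑ nᵢ = N}`.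
A point of it with a fractional coordinate has a second fractional coordinate (the sum is an
integer), and moving along `eᵢ - eⱼ` in both directions stays inside, so the extreme points are the
0/1 vectors with `N` ones; by Krein–Milman `n = ∑ₚ μₚ 1ₚ` is a convex combination of them. Then
`ρ = ∑ₚ μₚ |Φₚ⟩⟨Φₚ|`, with `Φₚ` the Slater determinant of the columns `p` of `U`, whose coefficients
are the minors `det U[t, p]`. Laplace expansion along one row expresses `aᵢ Φₚ` through Slater
determinants of one particle less; with `aᵢ† aⱼ = (aᵢ)† aⱼ` this gives, by induction on the
particle number, that the `Φₚ` are orthonormal (Cauchy–Binet) and that the 1RDM of `Φₚ` is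
`∑_{k ∈ p} U_{ik} conj U_{jk}`.
-/

namespace Coleman

section OrderedEnumeration

variable {α : Type*} [LinearOrder α] {m : ℕ}

def numLT (s : Finset α) (a : α) : ℕ := (s.filter (· < a)).card

lemma numLT_le_card (s : Finset α) (a : α) : numLT s a ≤ s.card := Finset.card_filter_le _ _

lemma orderEmbOfFin_lt_iff {s : Finset α} (h : s.card = m) (b : Fin m) (a : α) :
    s.orderEmbOfFin h b < a ↔ (b : ℕ) < numLT s a := by
  have hcard := fun t => Finset.card_image_of_injective t (s.orderEmbOfFin h).injective
  constructor
  · intro hba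
    have hsub : (Finset.Iic b).image (s.orderEmbOfFin h) ⊆ s.filter (· < a) := by
      simp only [Finset.subset_iff, Finset.mem_image, Finset.mem_Iic, Finset.mem_filter]
      rintro _ ⟨c, hcb, rfl⟩
      exact ⟨s.orderEmbOfFin_mem h c, ((s.orderEmbOfFin h).monotone hcb).trans_lt hba⟩
    have := Finset.card_le_card hsub
    rw [hcard, Fin.card_Iic] at this
    exact this
  · intro hb
    by_contra! hab
    have hsub : s.filter (· < a) ⊆ (Finset.Iio b).image (s.orderEmbOfFin h) := by
      intro x hx
      obtain ⟨hxs, hxa⟩ := Finset.mem_filter.1 hx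
      obtain ⟨c, rfl⟩ : x ∈ Set.range (s.orderEmbOfFin h) := by
        rwa [Finset.range_orderEmbOfFin]
      exact Finset.mem_image_of_mem _ (Finset.mem_Iio.2 ((s.orderEmbOfFin h).lt_iff_lt.1
        (hxa.trans_le hab)))
    have := Finset.card_le_card hsub
    rw [hcard, Fin.card_Iio] at this
    exact (hb.trans_le this).false

lemma numLT_orderEmbOfFin {s : Finset α} (h : s.card = m) (b : Fin m) :
    numLT s (s.orderEmbOfFin h b) = b := by
  have hfilter : s.filter (· < s.orderEmbOfFin h b) =
      (Finset.Iio b).map (s.orderEmbOfFin h).toEmbedding := by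
    ext x
    simp only [Finset.mem_filter, Finset.mem_map, Finset.mem_Iio, RelEmbedding.coe_toEmbedding]
    constructor
    · rintro ⟨hxs, hxb⟩
      obtain ⟨c, rfl⟩ : x ∈ Set.range (s.orderEmbOfFin h) := by
        rwa [Finset.range_orderEmbOfFin]
      exact ⟨c, (s.orderEmbOfFin h).lt_iff_lt.1 hxb, rfl⟩
    · rintro ⟨c, hcb, rfl⟩
      exact ⟨s.orderEmbOfFin_mem h c, (s.orderEmbOfFin h).lt_iff_lt.2 hcb⟩
  rw [numLT, hfilter, Finset.card_map, Fin.card_Iio]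

lemma strictMono_insertNth {f : Fin m → α} (hf : StrictMono f) (p : Fin (m + 1)) {x : α}
    (hfx : ∀ b, f b < x ↔ (b : ℕ) < p) (hx : ∀ b, f b ≠ x) :
    StrictMono (Fin.insertNth (α := fun _ => α) p x f) := by
  have hxf : ∀ b : Fin m, (p : ℕ) ≤ b → x < f b := fun b hb =>
    (not_lt.1 ((hfx b).not.2 hb.not_gt)).lt_of_ne' (hx b)
  intro a a' haa'
  rcases eq_or_ne a p with rfl | ha
  · obtain ⟨b', rfl⟩ := Fin.exists_succAbove_eq haa'.ne'
    rw [Fin.insertNth_apply_same, Fin.insertNth_apply_succAbove]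
    exact hxf b' (by exact_mod_cast (Fin.lt_succAbove_iff_le_castSucc a b').1 haa')
  obtain ⟨b, rfl⟩ := Fin.exists_succAbove_eq ha
  rcases eq_or_ne a' p with rfl | ha'
  · rw [Fin.insertNth_apply_same, Fin.insertNth_apply_succAbove]
    exact (hfx b).2 (by exact_mod_cast (Fin.succAbove_lt_iff_castSucc_lt a' b).1 haa')
  obtain ⟨b', rfl⟩ := Fin.exists_succAbove_eq ha'
  rw [Fin.insertNth_apply_succAbove, Fin.insertNth_apply_succAbove]
  exact hf (Fin.succAbove_lt_succAbove_iff.1 haa')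

lemma card_erase_of_card_eq_succ {s : Finset α} (hs : s.card = m + 1) {a : α} (ha : a ∈ s) :
    (s.erase a).card = m := by
  rw [Finset.card_erase_of_mem ha, hs, Nat.add_sub_cancel]

def insertPos (s : Finset α) (hs : s.card = m) (a : α) : Fin (m + 1) :=
  ⟨numLT s a, Nat.lt_succ_of_le (hs ▸ numLT_le_card s a)⟩

lemma orderEmbOfFin_insert {s : Finset α} (hs : s.card = m) {a : α} (ha : a ∉ s)
    (h : (insert a s).card = m + 1) :
    ⇑((insert a s).orderEmbOfFin h) =
      Fin.insertNth (α := fun _ => α) (insertPos s hs a) a (s.orderEmbOfFin hs) := by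
  refine (Finset.orderEmbOfFin_unique h (fun c => ?_) (strictMono_insertNth
    (s.orderEmbOfFin hs).strictMono _ (orderEmbOfFin_lt_iff hs · a)
    fun b hb => ha (hb ▸ s.orderEmbOfFin_mem hs b :))).symm
  rcases eq_or_ne c (insertPos s hs a) with rfl | hc
  · simp
  · obtain ⟨b, rfl⟩ := Fin.exists_succAbove_eq hc
    simp [s.orderEmbOfFin_mem hs b]

lemma orderEmbOfFin_erase {s : Finset α} (hs : s.card = m + 1) (b : Fin (m + 1))
    (h : (s.erase (s.orderEmbOfFin hs b)).card = m) :
    ⇑((s.erase (s.orderEmbOfFin hs b)).orderEmbOfFin h) = s.orderEmbOfFin hs ∘ b.succAbove := by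
  refine (Finset.orderEmbOfFin_unique h (fun c => Finset.mem_erase.2 ⟨?_, s.orderEmbOfFin_mem hs _⟩)
    ((s.orderEmbOfFin hs).strictMono.comp (Fin.strictMono_succAbove b))).symm
  exact fun he => Fin.succAbove_ne b c ((s.orderEmbOfFin hs).injective he)

end OrderedEnumeration

lemma neg_one_pow_mul_self {R : Type*} [Monoid R] [HasDistribNeg R] (n : ℕ) :
    (-1 : R) ^ n * (-1) ^ n = 1 := by
  rw [← pow_add, ← two_mul, pow_mul, neg_one_sq, one_pow]

section Minors

variable {α R : Type*} [LinearOrder α] [CommRing R] (U : Matrix α α R) {m : ℕ}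

/-- The coefficient, at the configuration `t`, of the Slater determinant of the columns `A` of `U`
(zero unless `A` and `t` both have `m` elements). -/
noncomputable def minorDet (m : ℕ) (A t : Finset α) : R :=
  if h : A.card = m ∧ t.card = m then
    (Matrix.of fun a b : Fin m => U (t.orderEmbOfFin h.2 a) (A.orderEmbOfFin h.1 b)).det
  else 0

/-- The coefficient at `r` of the annihilation operator `aᵢ` applied to the Slater determinant of
the columns `A` of `U`. -/
noncomputable def annMinor (m : ℕ) (A : Finset α) (i : α) (r : Finset α) : R :=
  if i ∈ r then 0 else (-1) ^ numLT r i * minorDet U (m + 1) A (insert i r)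

lemma annMinor_eq_sum {A r : Finset α} (hA : A.card = m + 1) (hr : r.card = m) (i : α) :
    annMinor U m A i r = ∑ k ∈ A, (-1) ^ numLT A k * U i k * minorDet U m (A.erase k) r := by
  set p := insertPos r hr i
  set M : Matrix (Fin (m + 1)) (Fin (m + 1)) R := Matrix.of fun a b =>
    U (Fin.insertNth (α := fun _ => α) p i (r.orderEmbOfFin hr) a) (A.orderEmbOfFin hA b)
  have hexpand : (-1) ^ numLT r i * M.det =
      ∑ k ∈ A, (-1) ^ numLT A k * U i k * minorDet U m (A.erase k) r := by
    have hreindex := Finset.sum_map Finset.univ (A.orderEmbOfFin hA).toEmbedding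
      fun k => (-1) ^ numLT A k * U i k * minorDet U m (A.erase k) r
    rw [Finset.map_orderEmbOfFin_univ] at hreindex
    rw [hreindex, M.det_succ_row p, Finset.mul_sum, show numLT r i = p from rfl]
    refine Finset.sum_congr rfl fun b _ => ?_
    have hcard := card_erase_of_card_eq_succ hA (A.orderEmbOfFin_mem hA b)
    have hminor : minorDet U m (A.erase (A.orderEmbOfFin hA b)) r =
        (M.submatrix p.succAbove b.succAbove).det := by
      rw [minorDet, dif_pos ⟨hcard, hr⟩, orderEmbOfFin_erase hA b hcard]
      congr 1
      ext a c
      simp [M]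
    rw [RelEmbedding.coe_toEmbedding, numLT_orderEmbOfFin, hminor]
    simp only [M, Matrix.of_apply, Fin.insertNth_apply_same, pow_add]
    linear_combination (-1 : R) ^ (b : ℕ) * U i (A.orderEmbOfFin hA b) *
      (M.submatrix p.succAbove b.succAbove).det * neg_one_pow_mul_self (R := R) (p : ℕ)
  rw [← hexpand, annMinor]
  by_cases hi : i ∈ r
  · obtain ⟨c, hc⟩ : i ∈ Set.range (r.orderEmbOfFin hr) := by rwa [Finset.range_orderEmbOfFin]
    have hrow : M (p.succAbove c) = M p := by
      ext b
      simp [M, hc]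
    rw [if_pos hi, Matrix.det_zero_of_row_eq (Fin.succAbove_ne p c) hrow, mul_zero]
  · have hcard : (insert i r).card = m + 1 := by rw [Finset.card_insert_of_notMem hi, hr]
    rw [if_neg hi, minorDet, dif_pos ⟨hA, hcard⟩, orderEmbOfFin_insert hr hi hcard]

end Minors

lemma sum_sum_powersetCard_insert {α M : Type*} [Fintype α] [DecidableEq α] [AddCommMonoid M]
    (m : ℕ) (F : Finset α → M) :
    ∑ i, ∑ r ∈ Finset.powersetCard m Finset.univ, (if i ∈ r then 0 else F (insert i r)) =
      (m + 1) • ∑ t ∈ Finset.powersetCard (m + 1) Finset.univ, F t := by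
  have hinsert : ∀ i,
      ∑ r ∈ Finset.powersetCard m Finset.univ, (if i ∈ r then 0 else F (insert i r)) =
        ∑ t ∈ Finset.powersetCard (m + 1) Finset.univ, if i ∈ t then F t else 0 := by
    intro i
    simp only [Finset.sum_ite, Finset.sum_const_zero, zero_add, add_zero]
    refine Finset.sum_nbij' (insert i) (·.erase i) ?_ ?_ ?_ ?_ fun _ _ => rfl
    · simp +contextual [Finset.card_insert_of_notMem]
    · simp +contextual [Finset.card_erase_of_mem]
    · simp +contextual
    · simp +contextual [Finset.insert_erase]
  simp only [hinsert]
  rw [Finset.sum_comm, Finset.smul_sum]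
  refine Finset.sum_congr rfl fun t ht => ?_
  rw [Finset.sum_ite_mem, Finset.univ_inter, Finset.sum_const, (Finset.mem_powersetCard_univ.1 ht)]

lemma sum_sign_erase_eq_erase {α R : Type*} [LinearOrder α] [CommRing R] {m : ℕ}
    {A B : Finset α} (hA : A.card = m + 1) :
    ∑ k ∈ A, ∑ l ∈ B, (if k = l then 1 else 0) *
      ((-1 : R) ^ (numLT A k + numLT B l) * if A.erase k = B.erase l then 1 else 0) =
      (m + 1) • if A = B then 1 else 0 := by
  have hdiag : ∀ k ∈ A, ∑ l ∈ B, (if k = l then 1 else 0) *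
      ((-1 : R) ^ (numLT A k + numLT B l) * if A.erase k = B.erase l then 1 else 0) =
      if A = B then 1 else 0 := by
    intro k hkA
    simp only [boole_mul, Finset.sum_ite_eq]
    by_cases hAB : A = B
    · subst hAB
      simp [hkA, neg_one_pow_mul_self, pow_add]
    · have hne : k ∈ B → A.erase k ≠ B.erase k := fun hkB he =>
        hAB (by rw [← Finset.insert_erase hkA, he, Finset.insert_erase hkB])
      by_cases hkB : k ∈ B <;> simp [hAB, hkB, hne]
  rw [Finset.sum_congr rfl hdiag, Finset.sum_const, hA]

section Orthonormality

variable {α R : Type*} [LinearOrder α] [Fintype α] [CommRing R] [StarRing R] (U : Matrix α α R)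
  {m : ℕ}

lemma sum_star_annMinor_mul_annMinor {A B : Finset α} (hA : A.card = m + 1) (hB : B.card = m + 1)
    (i j : α) :
    ∑ r ∈ Finset.powersetCard m Finset.univ, star (annMinor U m A i r) * annMinor U m B j r =
      ∑ k ∈ A, ∑ l ∈ B, (-1) ^ (numLT A k + numLT B l) * (star (U i k) * U j l) *
        ∑ r ∈ Finset.powersetCard m Finset.univ,
          star (minorDet U m (A.erase k) r) * minorDet U m (B.erase l) r := by
  calc _ = ∑ r ∈ Finset.powersetCard m Finset.univ, ∑ k ∈ A, ∑ l ∈ B,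
        (-1) ^ (numLT A k + numLT B l) * (star (U i k) * U j l) *
          (star (minorDet U m (A.erase k) r) * minorDet U m (B.erase l) r) := by
        refine Finset.sum_congr rfl fun r hr => ?_
        have hr := Finset.mem_powersetCard_univ.1 hr
        rw [annMinor_eq_sum U hA hr, annMinor_eq_sum U hB hr, star_sum, Finset.sum_mul_sum]
        refine Finset.sum_congr rfl fun k _ => Finset.sum_congr rfl fun l _ => ?_
        simp only [star_mul, star_pow, star_neg, star_one, pow_add]
        ring
    _ = _ := by
        rw [Finset.sum_comm]
        refine Finset.sum_congr rfl fun k _ => ?_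
        rw [Finset.sum_comm]
        exact Finset.sum_congr rfl fun l _ => (Finset.mul_sum ..).symm

lemma sum_star_mul_of_conjTranspose_mul_self (hU : Uᴴ * U = 1) (k l : α) :
    ∑ i, star (U i k) * U i l = if k = l then 1 else 0 := by
  simpa [Matrix.mul_apply, Matrix.one_apply] using congrFun (congrFun hU k) l

theorem sum_star_minorDet_mul_minorDet [IsAddTorsionFree R] (hU : Uᴴ * U = 1) :
    ∀ {m : ℕ} {A B : Finset α}, A.card = m → B.card = m →
      ∑ t ∈ Finset.powersetCard m Finset.univ, star (minorDet U m A t) * minorDet U m B t =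
        if A = B then 1 else 0 := by
  intro m
  induction m with
  | zero =>
    intro A B hA hB
    rw [Finset.card_eq_zero] at hA hB
    subst hA hB
    simp [minorDet]
  | succ m ih =>
    intro A B hA hB
    refine IsAddTorsionFree.nsmul_right_injective m.succ_ne_zero ?_
    -- `∑ᵢ aᵢ† aᵢ` acts as `m + 1` on the `(m + 1)`-particle space.
    calc (m + 1) • ∑ t ∈ Finset.powersetCard (m + 1) Finset.univ,
          star (minorDet U (m + 1) A t) * minorDet U (m + 1) B t
        = ∑ i, ∑ r ∈ Finset.powersetCard m Finset.univ,
            star (annMinor U m A i r) * annMinor U m B i r := by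
          rw [← sum_sum_powersetCard_insert]
          refine Finset.sum_congr rfl fun i _ => Finset.sum_congr rfl fun r _ => ?_
          by_cases hir : i ∈ r
          · simp [annMinor, hir]
          · simp only [annMinor, hir, if_false, star_mul, star_pow, star_neg, star_one]
            linear_combination -(star (minorDet U (m + 1) A (insert i r)) *
              minorDet U (m + 1) B (insert i r)) * neg_one_pow_mul_self (R := R) (numLT r i)
      _ = ∑ k ∈ A, ∑ l ∈ B, (if k = l then 1 else 0) *
            ((-1 : R) ^ (numLT A k + numLT B l) * if A.erase k = B.erase l then 1 else 0) := by
          simp only [sum_star_annMinor_mul_annMinor U hA hB]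
          rw [Finset.sum_comm]
          refine Finset.sum_congr rfl fun k hk => ?_
          rw [Finset.sum_comm]
          refine Finset.sum_congr rfl fun l hl => ?_
          rw [← Finset.sum_mul, ← Finset.mul_sum, sum_star_mul_of_conjTranspose_mul_self U hU,
            ih (card_erase_of_card_eq_succ hA hk) (card_erase_of_card_eq_succ hB hl)]
          ring
      _ = _ := sum_sign_erase_eq_erase hA

end Orthonormality

section Polytope

variable {ι : Type*} [Fintype ι]

lemma exists_weights_of_mem_convexHull_range {κ E : Type*} [Fintype κ] [AddCommGroup E]
    [Module ℝ E] {v : κ → E} {x : E} (hx : x ∈ convexHull ℝ (Set.range v)) :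
    ∃ μ : κ → ℝ, (∀ s, 0 ≤ μ s) ∧ ∑ s, μ s = 1 ∧ ∑ s, μ s • v s = x := by
  classical
  have hrange : Set.range v = Fintype.linearCombination ℝ v '' Set.range (Pi.single · 1) := by
    rw [← Set.range_comp]
    congr 1
    ext s
    simp [Fintype.linearCombination_apply_single]
  rw [hrange, ← LinearMap.image_convexHull, convexHull_rangle_single_eq_stdSimplex] at hx
  obtain ⟨μ, ⟨hμ0, hμ1⟩, rfl⟩ := hx
  exact ⟨μ, hμ0, hμ1, (Fintype.linearCombination_apply ℝ v μ).symm⟩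

def occupationPolytope (ι : Type*) [Fintype ι] (N : ℕ) : Set (ι → ℝ) :=
  Set.univ.pi (fun _ => Set.Icc 0 1) ∩ {n | ∑ i, n i = N}

lemma mem_occupationPolytope {N : ℕ} {n : ι → ℝ} :
    n ∈ occupationPolytope ι N ↔ (∀ i, 0 ≤ n i ∧ n i ≤ 1) ∧ ∑ i, n i = N := by
  simp only [occupationPolytope, Set.mem_inter_iff, Set.mem_univ_pi, Set.mem_Icc,
    Set.mem_ofPred_eq]

lemma isCompact_occupationPolytope (N : ℕ) : IsCompact (occupationPolytope ι N) :=
  (isCompact_univ_pi fun _ => isCompact_Icc).inter_right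
    (isClosed_eq (by fun_prop) continuous_const)

lemma convex_occupationPolytope (N : ℕ) : Convex ℝ (occupationPolytope ι N) :=
  (convex_pi fun _ _ => convex_Icc 0 1).inter
    (convex_hyperplane ⟨fun _ _ => Finset.sum_add_distrib, fun _ _ => by simp [Finset.mul_sum]⟩ _)

variable [DecidableEq ι] {N : ℕ} {n : ι → ℝ}

lemma exists_ne_fractional_of_mem_occupationPolytope (hn : n ∈ occupationPolytope ι N) {i : ι}
    (hi : 0 < n i ∧ n i < 1) : ∃ j ≠ i, 0 < n j ∧ n j < 1 := by
  rw [mem_occupationPolytope] at hn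
  by_contra! hint
  have hrest : ∑ j ∈ Finset.univ.erase i, n j =
      ((Finset.univ.erase i).filter (n · = 1)).card := by
    rw [Finset.natCast_card_filter]
    refine Finset.sum_congr rfl fun j hj => ?_
    rcases (hn.1 j).1.eq_or_lt with h0 | h0
    · simp [← h0]
    · simp [le_antisymm (hn.1 j).2 (hint j (Finset.ne_of_mem_erase hj) h0)]
  have hsum := hn.2
  rw [← Finset.add_sum_erase _ _ (Finset.mem_univ i), hrest] at hsum
  have hlt : ((Finset.univ.erase i).filter (n · = 1)).card < N := by
    exact_mod_cast (by linarith : (((Finset.univ.erase i).filter (n · = 1)).card : ℝ) < N)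
  have hgt : N < ((Finset.univ.erase i).filter (n · = 1)).card + 1 := by
    exact_mod_cast (by linarith : (N : ℝ) < ((Finset.univ.erase i).filter (n · = 1)).card + 1)
  omega

lemma add_single_sub_single_mem_occupationPolytope (hn : n ∈ occupationPolytope ι N) {i j : ι}
    (hij : i ≠ j) {t : ℝ} (hi : 0 ≤ n i + t ∧ n i + t ≤ 1) (hj : 0 ≤ n j - t ∧ n j - t ≤ 1) :
    n + Pi.single i t - Pi.single j t ∈ occupationPolytope ι N := by
  rw [mem_occupationPolytope] at hn ⊢
  refine ⟨fun k => ?_, by simp [Finset.sum_add_distrib, Finset.sum_sub_distrib, hn.2]⟩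
  by_cases hki : k = i
  · subst hki; simpa [hij] using hi
  by_cases hkj : k = j
  · subst hkj; simpa [hki] using hj
  simpa [hki, hkj] using hn.1 k

lemma extremePoints_occupationPolytope_subset :
    (occupationPolytope ι N).extremePoints ℝ ⊆
      Set.range fun s : {s : Finset ι // s.card = N} =>
        fun i => if i ∈ s.1 then (1 : ℝ) else 0 := by
  intro n hn
  have hmem := hn.1
  have h01 : ∀ i, n i = 0 ∨ n i = 1 := by
    by_contra! ⟨i, hi0, hi1⟩
    have hbox := (mem_occupationPolytope.1 hmem).1
    have hi : 0 < n i ∧ n i < 1 := ⟨(hbox i).1.lt_of_ne' hi0, (hbox i).2.lt_of_ne hi1⟩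
    obtain ⟨j, hji, hj⟩ := exists_ne_fractional_of_mem_occupationPolytope hmem hi
    set ε := min (min (n i) (1 - n i)) (min (n j) (1 - n j))
    have hε : 0 < ε := by simp only [ε, lt_min_iff]; constructor <;> constructor <;> linarith
    have hεi : ε ≤ n i ∧ ε ≤ 1 - n i := ⟨by simp [ε], by simp [ε]⟩
    have hεj : ε ≤ n j ∧ ε ≤ 1 - n j := ⟨by simp [ε], by simp [ε]⟩
    have hplus := add_single_sub_single_mem_occupationPolytope hmem hji.symm (t := ε)
      ⟨by linarith, by linarith⟩ ⟨by linarith, by linarith⟩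
    have hminus := add_single_sub_single_mem_occupationPolytope hmem hji.symm (t := -ε)
      ⟨by linarith, by linarith⟩ ⟨by linarith, by linarith⟩
    have hseg : n ∈ openSegment ℝ (n + Pi.single i ε - Pi.single j ε)
        (n + Pi.single i (-ε) - Pi.single j (-ε)) :=
      ⟨1 / 2, 1 / 2, by norm_num, by norm_num, by norm_num,
        by ext k; simp only [Pi.add_apply, Pi.sub_apply, Pi.smul_apply, Pi.single_neg,
          Pi.neg_apply, smul_eq_mul]; ring⟩
    have := congrFun ((mem_extremePoints.1 hn).2 _ hplus _ hminus hseg).1 i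
    simp [hji.symm] at this
    exact hε.ne' this
  set s := Finset.univ.filter (n · = 1)
  have hind : n = fun i => if i ∈ s then 1 else 0 :=
    funext fun i => by by_cases h : n i = 1 <;> simp [s, h, (h01 i).resolve_right]
  have hcard : s.card = N := by
    have hsum := (mem_occupationPolytope.1 hmem).2
    rw [hind, Finset.sum_boole, Finset.filter_univ_mem] at hsum
    exact_mod_cast hsum
  exact ⟨⟨s, hcard⟩, hind.symm⟩

theorem exists_weights_of_mem_occupationPolytope (hn : n ∈ occupationPolytope ι N) :
    ∃ μ : {s : Finset ι // s.card = N} → ℝ, (∀ s, 0 ≤ μ s) ∧ ∑ s, μ s = 1 ∧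
      ∀ i, n i = ∑ s, μ s * (if i ∈ s.1 then 1 else 0) := by
  have hsub : occupationPolytope ι N ⊆ convexHull ℝ (Set.range
      fun s : {s : Finset ι // s.card = N} => fun i => if i ∈ s.1 then (1 : ℝ) else 0) := by
    rw [← closure_convexHull_extremePoints (isCompact_occupationPolytope N)
      (convex_occupationPolytope N)]
    exact closure_minimal (convexHull_mono extremePoints_occupationPolytope_subset)
      ((Set.finite_range _).isClosed_convexHull ℝ)
  obtain ⟨μ, hμ0, hμ1, hμn⟩ := exists_weights_of_mem_convexHull_range (hsub hn)
  refine ⟨μ, hμ0, hμ1, fun i => ?_⟩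
  simp [← hμn, Finset.sum_apply]

end Polytope

section Spectral

variable {𝕜 n : Type*} [RCLike 𝕜] [Fintype n] [DecidableEq n] {A : Matrix n n 𝕜}

lemma apply_eq_sum_eigenvalues (hA : A.IsHermitian) (i j : n) :
    A i j = ∑ k, (hA.eigenvectorUnitary : Matrix n n 𝕜) i k * hA.eigenvalues k *
      star ((hA.eigenvectorUnitary : Matrix n n 𝕜) j k) := by
  conv_lhs => rw [hA.spectral_theorem, Unitary.conjStarAlgAut_apply, Matrix.mul_apply]
  simp [Matrix.mul_diagonal]

lemma eigenvalues_le_one (hA : A.IsHermitian) (h : (1 - A).PosSemidef) (k : n) :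
    hA.eigenvalues k ≤ 1 := by
  have hconj := h.conjTranspose_mul_mul_same (hA.eigenvectorUnitary : Matrix n n 𝕜)
  have hdiag := hA.conjStarAlgAut_star_eigenvectorUnitary
  rw [Unitary.conjStarAlgAut_star_apply] at hdiag
  rw [← Matrix.star_eq_conjTranspose, mul_sub, sub_mul, mul_one, Unitary.coe_star_mul_self,
    hdiag] at hconj
  exact_mod_cast (by simpa using hconj.diag_nonneg (i := k) : (hA.eigenvalues k : 𝕜) ≤ 1)

end Spectral

section Fermions

variable {Nb : ℕ}

/-- The matrix of the annihilation operator `aᵢ` from `m + 1` to `m` particles, in the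
occupation-number basis. -/
def annCoeff (i : Fin Nb) (r s : Finset (Fin Nb)) : ℂ :=
  if i ∉ r ∧ s = insert i r then (-1) ^ numLT r i else 0

lemma annCoeff_eq_zero_of_ne_erase {i : Fin Nb} {r s : Finset (Fin Nb)} (h : r ≠ s.erase i) :
    annCoeff i r s = 0 :=
  if_neg fun ⟨hi, hs⟩ => h (by rw [hs, Finset.erase_insert hi])

lemma fOp_eq_sum_annCoeff {m : ℕ} (i j : Fin Nb) (s t : FConfig Nb (m + 1)) :
    fOp i j s t = ∑ r ∈ Finset.powersetCard m Finset.univ, annCoeff i r s.1 * annCoeff j r t.1 := by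
  have hj_of_ne : j ∉ t.1 → annCoeff j (t.1.erase j) t.1 = 0 := fun hj =>
    if_neg fun ⟨_, ht⟩ => hj (ht ▸ Finset.mem_insert_self j _)
  rw [Finset.sum_eq_single (t.1.erase j)
    (fun r _ hr => by rw [annCoeff_eq_zero_of_ne_erase hr, mul_zero])
    (fun hr => by
      rw [hj_of_ne fun hj => hr (Finset.mem_powersetCard_univ.2
        (card_erase_of_card_eq_succ t.2 hj)), mul_zero])]
  by_cases hj : j ∈ t.1
  · have hnumLT : numLT (t.1.erase j) j = numLT t.1 j := by
      rw [numLT, Finset.filter_erase, Finset.erase_eq_of_notMem (by simp)]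
      rfl
    have hi : i ∉ t.1.erase j ↔ i = j ∨ i ∉ t.1 := by
      rw [Finset.mem_erase, not_and_or, not_not]
    simp only [fOp, annCoeff, Finset.notMem_erase, Finset.insert_erase hj, hi, hj, hnumLT,
      not_false_eq_true, true_and, if_true, ite_mul, zero_mul]
    split_ifs
    · rw [pow_add, mul_comm]
      rfl
    · rfl
  · rw [hj_of_ne hj, mul_zero, fOp, if_neg fun h => hj h.1]

lemma star_annCoeff (i : Fin Nb) (r s : Finset (Fin Nb)) :
    star (annCoeff i r s) = annCoeff i r s := by
  unfold annCoeff
  split_ifs <;> simp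

lemma sum_annCoeff_mul {m : ℕ} (i : Fin Nb) {r : Finset (Fin Nb)} (hr : r.card = m)
    (f : Finset (Fin Nb) → ℂ) :
    ∑ x : FConfig Nb (m + 1), annCoeff i r x.1 * f x.1 =
      if i ∈ r then 0 else (-1) ^ numLT r i * f (insert i r) := by
  by_cases hi : i ∈ r
  · simp [annCoeff, hi]
  have hcard : (insert i r).card = m + 1 := by rw [Finset.card_insert_of_notMem hi, hr]
  rw [Finset.sum_eq_single ⟨insert i r, hcard⟩ (fun x _ hx => by
    rw [annCoeff, if_neg fun h => hx (Subtype.ext h.2), zero_mul]) (by simp)]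
  simp [annCoeff, hi]

noncomputable def slaterVec (U : Matrix (Fin Nb) (Fin Nb) ℂ) (N : ℕ) (A : Finset (Fin Nb)) :
    FConfig Nb N → ℂ :=
  fun t => minorDet U N A t.1

lemma gammaF_vecMulVec_apply {N : ℕ} (v : FConfig Nb N → ℂ) (i j : Fin Nb) :
    gammaF (Matrix.vecMulVec v (star v)) i j = ∑ x, ∑ y, v x * star (v y) * fOp j i y x := by
  simp [gammaF, Matrix.trace, Matrix.mul_apply, Matrix.vecMulVec_apply]

theorem gammaF_slaterVec {U : Matrix (Fin Nb) (Fin Nb) ℂ} (hU : Uᴴ * U = 1) {N : ℕ}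
    {A : Finset (Fin Nb)} (hA : A.card = N) (i j : Fin Nb) :
    gammaF (Matrix.vecMulVec (slaterVec U N A) (star (slaterVec U N A))) i j =
      ∑ k ∈ A, U i k * star (U j k) := by
  rw [gammaF_vecMulVec_apply]
  cases N with
  | zero =>
    rw [Finset.card_eq_zero.1 hA, Finset.sum_empty]
    refine Finset.sum_eq_zero fun x _ => Finset.sum_eq_zero fun y _ => ?_
    rw [fOp, if_neg fun h => by simpa [Finset.card_eq_zero.1 x.2] using h.1, mul_zero]
  | succ m =>
    calc _ = ∑ r ∈ Finset.powersetCard m Finset.univ,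
          star (annMinor U m A j r) * annMinor U m A i r := by
          have hann : ∀ i, ∀ r ∈ Finset.powersetCard m Finset.univ, annMinor U m A i r =
              ∑ x, annCoeff i r x.1 * slaterVec U (m + 1) A x := fun i r hr =>
            (sum_annCoeff_mul i (Finset.mem_powersetCard_univ.1 hr) _).symm
          simp only [fOp_eq_sum_annCoeff, Finset.mul_sum]
          symm
          rw [Finset.sum_congr rfl fun r hr => by
            rw [hann j r hr, hann i r hr, star_sum, Finset.sum_mul_sum], Finset.sum_comm]
          conv_rhs => rw [Finset.sum_comm]
          refine Finset.sum_congr rfl fun y _ => ?_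
          rw [Finset.sum_comm]
          refine Finset.sum_congr rfl fun x _ => Finset.sum_congr rfl fun r _ => ?_
          rw [star_mul, star_annCoeff]
          ring
      _ = ∑ k ∈ A, ∑ l ∈ A, (if k = l then 1 else 0) * (star (U j k) * U i l) := by
          rw [sum_star_annMinor_mul_annMinor U hA hA]
          refine Finset.sum_congr rfl fun k hk => Finset.sum_congr rfl fun l hl => ?_
          rw [sum_star_minorDet_mul_minorDet U hU (card_erase_of_card_eq_succ hA hk)
            (card_erase_of_card_eq_succ hA hl)]
          simp only [Finset.erase_inj A hk]
          split_ifs with hkl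
          · subst hkl
            rw [pow_add, neg_one_pow_mul_self]
            ring
          · ring
      _ = ∑ k ∈ A, U i k * star (U j k) := by
          simp only [boole_mul, Finset.sum_ite_eq]
          exact Finset.sum_congr rfl fun k hk => by rw [if_pos hk, mul_comm]

end Fermions

section DensityMatrix

variable {Nb N : ℕ} (U : Matrix (Fin Nb) (Fin Nb) ℂ)

noncomputable def slaterMixture (μ : FConfig Nb N → ℝ) : Matrix (FConfig Nb N) (FConfig Nb N) ℂ :=
  ∑ p, (μ p : ℂ) • Matrix.vecMulVec (slaterVec U N p.1) (star (slaterVec U N p.1))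

lemma posSemidef_slaterMixture {μ : FConfig Nb N → ℝ} (hμ : ∀ p, 0 ≤ μ p) :
    (slaterMixture U μ).PosSemidef :=
  Matrix.posSemidef_sum _ fun p _ =>
    (Matrix.posSemidef_vecMulVec_self_star _).smul (Complex.zero_le_real.2 (hμ p))

variable {U}

lemma slaterVec_dotProduct_star (hU : Uᴴ * U = 1) {A : Finset (Fin Nb)} (hA : A.card = N) :
    slaterVec U N A ⬝ᵥ star (slaterVec U N A) = 1 := by
  have h := sum_star_minorDet_mul_minorDet U hU hA hA
  rw [if_pos rfl, Finset.sum_subtype _ (fun _ => Finset.mem_powersetCard_univ)] at h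
  simpa only [slaterVec, dotProduct, Pi.star_apply, mul_comm] using h

lemma trace_slaterMixture (hU : Uᴴ * U = 1) {μ : FConfig Nb N → ℝ} (hμ : ∑ p, μ p = 1) :
    (slaterMixture U μ).trace = 1 := by
  rw [slaterMixture, Matrix.trace_sum, Finset.sum_congr rfl fun p _ => by
    rw [Matrix.trace_smul, Matrix.trace_vecMulVec, slaterVec_dotProduct_star hU p.2, smul_eq_mul,
      mul_one]]
  exact_mod_cast hμ

lemma gammaF_slaterMixture (hU : Uᴴ * U = 1) (μ : FConfig Nb N → ℝ) (i j : Fin Nb) :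
    gammaF (slaterMixture U μ) i j =
      ∑ k, U i k * ((∑ p, μ p * if k ∈ p.1 then 1 else 0 : ℝ) : ℂ) * star (U j k) := by
  have hlin : gammaF (slaterMixture U μ) i j = ∑ p, (μ p : ℂ) *
      gammaF (Matrix.vecMulVec (slaterVec U N p.1) (star (slaterVec U N p.1))) i j := by
    simp [gammaF, slaterMixture, Finset.sum_mul, Matrix.trace_sum]
  rw [hlin, Finset.sum_congr rfl fun p _ => by rw [gammaF_slaterVec hU p.2]]
  push_cast
  simp only [Finset.mul_sum, Finset.sum_mul]
  rw [Finset.sum_comm]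
  refine Finset.sum_congr rfl fun p _ => ?_
  rw [← Finset.sum_subset p.1.subset_univ fun k _ hk => by simp [hk]]
  exact Finset.sum_congr rfl fun k hk => by simp only [hk, if_true]; push_cast; ring

end DensityMatrix

end Coleman

open Coleman in
theorem coleman_fermionic_general {Nb N : ℕ} :
    (∀ γ : Matrix (Fin Nb) (Fin Nb) ℂ, γ.PosSemidef → (1 - γ).PosSemidef →
      γ.trace = (N : ℂ) →
      ∃ ρ : Matrix (FConfig Nb N) (FConfig Nb N) ℂ,
        ρ.PosSemidef ∧ ρ.trace = 1 ∧ gammaF ρ = γ) ∧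
    (∀ n : Fin Nb → ℝ, (∀ i, 0 ≤ n i ∧ n i ≤ 1) → ∑ i, n i = N →
      ∃ μ : FConfig Nb N → ℝ, (∀ s, 0 ≤ μ s) ∧ ∑ s, μ s = 1 ∧
        ∀ i, n i = ∑ s, μ s * (if i ∈ s.1 then 1 else 0)) := by
  refine ⟨fun γ hγ hγ1 htr => ?_, fun n hbox hsum =>
    exists_weights_of_mem_occupationPolytope (mem_occupationPolytope.2 ⟨hbox, hsum⟩)⟩
  set U : Matrix (Fin Nb) (Fin Nb) ℂ := (hγ.1.eigenvectorUnitary : Matrix (Fin Nb) (Fin Nb) ℂ)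
  have hU : Uᴴ * U = 1 := by
    rw [← Matrix.star_eq_conjTranspose]
    exact Unitary.coe_star_mul_self _
  have hn : hγ.1.eigenvalues ∈ occupationPolytope (Fin Nb) N := mem_occupationPolytope.2
    ⟨fun k => ⟨hγ.eigenvalues_nonneg k, eigenvalues_le_one hγ.1 hγ1 k⟩,
      by simpa using congrArg Complex.re (hγ.1.trace_eq_sum_eigenvalues.symm.trans htr)⟩
  obtain ⟨μ, hμ0, hμ1, hμn⟩ := exists_weights_of_mem_occupationPolytope hn
  refine ⟨slaterMixture U μ, posSemidef_slaterMixture U hμ0, trace_slaterMixture hU hμ1, ?_⟩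
  ext i j
  rw [gammaF_slaterMixture hU, apply_eq_sum_eigenvalues hγ.1]
  simp only [← hμn]
  rfl

/-- (Coleman, fermionic case) Every Hermitian `N_b × N_b` matrix `γ` with `0 ≤ γ ≤ 1` and
`Tr γ = N` is the 1RDM of some `N`-fermion density matrix. Moreover, the underlying combinatorial
fact holds: every occupation-number vector `n ∈ [0,1]^{N_b}` with `∑ nᵢ = N` is a convex
combination of 0/1 vectors with exactly `N` ones (the extreme points of the polytope). -/
theorem coleman_fermionic {Nb N : ℕ} (hN : N ≤ Nb) :
    (∀ γ : Matrix (Fin Nb) (Fin Nb) ℂ, γ.PosSemidef → (1 - γ).PosSemidef →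
      γ.trace = (N : ℂ) →
      ∃ ρ : Matrix (FConfig Nb N) (FConfig Nb N) ℂ,
        ρ.PosSemidef ∧ ρ.trace = 1 ∧ gammaF ρ = γ) ∧
    (∀ n : Fin Nb → ℝ, (∀ i, 0 ≤ n i ∧ n i ≤ 1) → ∑ i, n i = N →
      ∃ μ : FConfig Nb N → ℝ, (∀ s, 0 ≤ μ s) ∧ ∑ s, μ s = 1 ∧
        ∀ i, n i = ∑ s, μ s * (if i ∈ s.1 then 1 else 0)) :=
  coleman_fermionic_general
end
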